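/- arXiv:1504.04060 — 6 statements merged into one kernel-verified Lean document; each statement's English description precedes it below -/
import Mathlib

section
/- Let μ > 0 and p₁, …, p_N ∈ ℝ². Then the background function u₀'(x) = −Σ_{j=1}^{N} ln(1 + μ·|x − p_j|⁻²) (defined off the finitely many points p_j) belongs to L²(ℝ²), and the function g₀'(x) = Σ_{j=1}^{N} 4μ/(μ + |x − p_j|²)² belongs to L²(ℝ²). -/
/-!
After translating each singularity to the origin it suffices to treat one radial profile in a
finite-dimensional space. The source term `a / (c + ‖x‖²)²` is bounded by a multiple of
`(1 + ‖x‖²)⁻²`, whose square is integrable in dimension `< 8`. The square of the logarithm is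
`O(‖x‖^(-1/2))` near the origin, since `log y ≤ 8 y^(1/8)`, and is at most `c² ‖x‖⁻⁴` away from
it, since `log (1 + t) ≤ t`; both are integrable in dimensions `1, 2, 3`.
-/

open MeasureTheory Metric Set Real Module

lemma sq_log_le_rpow_of_one_le {y : ℝ} (hy : 1 ≤ y) : log y ^ 2 ≤ 64 * y ^ (1 / 4 : ℝ) := by
  have hlog : log y ≤ 8 * y ^ (1 / 8 : ℝ) := by
    have := log_le_rpow_div (x := y) (by linarith) (by norm_num : (0 : ℝ) < 1 / 8)
    linarith
  calc log y ^ 2 ≤ (8 * y ^ (1 / 8 : ℝ)) ^ 2 := pow_le_pow_left₀ (log_nonneg hy) hlog 2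
    _ = 64 * y ^ (1 / 4 : ℝ) := by
      rw [mul_pow, ← rpow_natCast (y ^ (1 / 8 : ℝ)), ← rpow_mul (by linarith)]
      norm_num

lemma sq_log_one_add_mul_inv_sq_le_of_le_one {c r : ℝ} (hc : 0 ≤ c) (hr0 : 0 < r) (hr1 : r ≤ 1) :
    log (1 + c * (r ^ 2)⁻¹) ^ 2 ≤ 64 * (1 + c) ^ (1 / 4 : ℝ) * r ^ (-(1 / 2) : ℝ) := by
  have hinv : 1 ≤ (r ^ 2)⁻¹ := one_le_inv₀ (by positivity) |>.2 (pow_le_one₀ hr0.le hr1)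
  have hy : 1 + c * (r ^ 2)⁻¹ ≤ (1 + c) * (r ^ 2)⁻¹ := by nlinarith
  calc log (1 + c * (r ^ 2)⁻¹) ^ 2 ≤ 64 * (1 + c * (r ^ 2)⁻¹) ^ (1 / 4 : ℝ) :=
        sq_log_le_rpow_of_one_le (by nlinarith)
    _ ≤ 64 * ((1 + c) * (r ^ 2)⁻¹) ^ (1 / 4 : ℝ) := by gcongr
    _ = 64 * (1 + c) ^ (1 / 4 : ℝ) * r ^ (-(1 / 2) : ℝ) := by
      rw [mul_rpow (by positivity) (by positivity), ← rpow_natCast, ← rpow_neg hr0.le,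
        ← rpow_mul hr0.le]
      norm_num [mul_assoc]

lemma sq_log_one_add_mul_inv_sq_le_of_one_le {c r : ℝ} (hc : 0 ≤ c) (hr : 1 ≤ r) :
    log (1 + c * (r ^ 2)⁻¹) ^ 2 ≤ 4 * c ^ 2 * ((1 + r ^ 2) ^ 2)⁻¹ := by
  have hr0 : 0 < r := by linarith
  have hlog : log (1 + c * (r ^ 2)⁻¹) ≤ c * (r ^ 2)⁻¹ := by
    have := log_le_sub_one_of_pos (x := 1 + c * (r ^ 2)⁻¹) (by positivity)
    linarith
  calc log (1 + c * (r ^ 2)⁻¹) ^ 2 ≤ (c * (r ^ 2)⁻¹) ^ 2 :=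
        pow_le_pow_left₀ (log_nonneg (le_add_of_nonneg_right (by positivity))) hlog 2
    _ ≤ 4 * c ^ 2 * ((1 + r ^ 2) ^ 2)⁻¹ := by
      rw [mul_pow, inv_pow, ← div_eq_mul_inv, ← div_eq_mul_inv,
        div_le_div_iff₀ (by positivity) (by positivity)]
      have : (1 + r ^ 2) ^ 2 ≤ 4 * (r ^ 2) ^ 2 := by nlinarith [one_le_pow₀ (n := 2) hr]
      nlinarith [mul_le_mul_of_nonneg_left this (sq_nonneg c)]

lemma sq_div_add_sq_sq_le {a c r : ℝ} (hc : 0 < c) :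
    (a / (c + r ^ 2) ^ 2) ^ 2 ≤ a ^ 2 / min c 1 ^ 4 * ((1 + r ^ 2) ^ 4)⁻¹ := by
  have hm : 0 < min c 1 := lt_min hc one_pos
  have hden : min c 1 * (1 + r ^ 2) ≤ c + r ^ 2 := by
    nlinarith [min_le_left c 1, min_le_right c 1, sq_nonneg r]
  calc (a / (c + r ^ 2) ^ 2) ^ 2 = a ^ 2 / (c + r ^ 2) ^ 4 := by rw [div_pow, ← pow_mul]
    _ ≤ a ^ 2 / (min c 1 * (1 + r ^ 2)) ^ 4 := by gcongr
    _ = a ^ 2 / min c 1 ^ 4 * ((1 + r ^ 2) ^ 4)⁻¹ := by rw [mul_pow, ← div_div, div_eq_mul_inv]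

variable {E : Type*} [NormedAddCommGroup E] [NormedSpace ℝ E] [FiniteDimensional ℝ E]
  [MeasurableSpace E] [BorelSpace E] {μ : Measure E} [μ.IsAddHaarMeasure]

lemma integrable_inv_one_add_norm_sq_pow {k : ℕ} (hk : finrank ℝ E < 2 * k) :
    Integrable (fun x : E => ((1 + ‖x‖ ^ 2) ^ k)⁻¹) μ := by
  convert integrable_rpow_neg_one_add_norm_sq (μ := μ) (r := 2 * k) (by exact_mod_cast hk)
    using 2 with x
  rw [neg_div, mul_div_cancel_left₀ _ two_ne_zero, rpow_neg (by positivity), rpow_natCast]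

lemma integrableOn_ball_sq_log_one_add_mul_inv_norm_sq (hd : 1 ≤ finrank ℝ E) {c : ℝ}
    (hc : 0 ≤ c) :
    IntegrableOn (fun x : E => log (1 + c * (‖x‖ ^ 2)⁻¹) ^ 2) (ball 0 1) μ := by
  refine integrableOn_ball_of_norm_le_rpow hd (α := 1 / 2) (C := 64 * (1 + c) ^ (1 / 4 : ℝ))
    (by norm_num; linarith [(by exact_mod_cast hd : (1 : ℝ) ≤ finrank ℝ E)]) ?_
    (Measurable.aestronglyMeasurable (by fun_prop))
  rw [ae_restrict_iff' measurableSet_ball]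
  refine ae_of_all _ fun x hx => ?_
  rw [mem_ball_zero_iff] at hx
  rw [norm_of_nonneg (sq_nonneg _)]
  rcases (norm_nonneg x).eq_or_lt with h0 | hpos
  · simp [← h0]
  · exact sq_log_one_add_mul_inv_sq_le_of_le_one hc hpos hx.le

lemma memLp_two_log_one_add_mul_inv_norm_sq (hd₁ : 1 ≤ finrank ℝ E) (hd₄ : finrank ℝ E < 4)
    {c : ℝ} (hc : 0 ≤ c) : MemLp (fun x : E => log (1 + c * (‖x‖ ^ 2)⁻¹)) 2 μ := by
  have hf : Measurable fun x : E => log (1 + c * (‖x‖ ^ 2)⁻¹) := by fun_prop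
  rw [memLp_two_iff_integrable_sq hf.aestronglyMeasurable, ← integrableOn_univ,
    ← union_compl_self (ball 0 1)]
  refine (integrableOn_ball_sq_log_one_add_mul_inv_norm_sq hd₁ hc).union ?_
  refine ((integrable_inv_one_add_norm_sq_pow (k := 2) hd₄).const_mul (4 * c ^ 2)).integrableOn
    |>.mono' (hf.pow_const 2).aestronglyMeasurable.restrict ?_
  rw [ae_restrict_iff' measurableSet_ball.compl]
  refine ae_of_all _ fun x hx => ?_
  rw [mem_compl_iff, mem_ball_zero_iff, not_lt] at hx
  rw [norm_of_nonneg (sq_nonneg _)]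
  exact sq_log_one_add_mul_inv_sq_le_of_one_le hc hx

lemma memLp_two_div_add_norm_sq_sq (hd : finrank ℝ E < 8) (a : ℝ) {c : ℝ} (hc : 0 < c) :
    MemLp (fun x : E => a / (c + ‖x‖ ^ 2) ^ 2) 2 μ := by
  have hf : Measurable fun x : E => a / (c + ‖x‖ ^ 2) ^ 2 := by fun_prop
  rw [memLp_two_iff_integrable_sq hf.aestronglyMeasurable]
  refine ((integrable_inv_one_add_norm_sq_pow (k := 4) hd).const_mul
    (a ^ 2 / min c 1 ^ 4)).mono' (hf.pow_const 2).aestronglyMeasurable (ae_of_all _ fun x => ?_)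
  rw [norm_of_nonneg (sq_nonneg _)]
  exact sq_div_add_sq_sq_le hc

/-- For `μ > 0` and points `p₁, …, p_N ∈ ℝ²`, the background function
`u₀'(x) = −Σ_j ln(1 + μ|x−p_j|⁻²)` and the regularized source
`g₀'(x) = Σ_j 4μ/(μ+|x−p_j|²)²` both belong to `L²(ℝ²)`. -/
theorem background_functions_mem_L2 (μ : ℝ) (hμ : 0 < μ)
    (N : ℕ) (pts : Fin N → EuclideanSpace ℝ (Fin 2)) :
    MemLp (fun x : EuclideanSpace ℝ (Fin 2) =>
        -∑ j, Real.log (1 + μ * (‖x - pts j‖ ^ 2)⁻¹)) 2 volume ∧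
    MemLp (fun x : EuclideanSpace ℝ (Fin 2) =>
        ∑ j, 4 * μ / (μ + ‖x - pts j‖ ^ 2) ^ 2) 2 volume := by
  have hd : finrank ℝ (EuclideanSpace ℝ (Fin 2)) = 2 := finrank_euclideanSpace_fin
  have translate (j : Fin N) : MeasurePreserving (· - pts j) volume volume :=
    measurePreserving_sub_right volume (pts j)
  constructor
  · refine MemLp.neg (f := fun x => ∑ j, log (1 + μ * (‖x - pts j‖ ^ 2)⁻¹))
      (memLp_finsetSum _ fun j _ => ?_)
    exact (memLp_two_log_one_add_mul_inv_norm_sq (by omega) (by omega) hμ.le)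
      |>.comp_measurePreserving (translate j)
  · exact memLp_finsetSum _ fun j _ =>
      (memLp_two_div_add_norm_sq_sq (by omega) _ hμ).comp_measurePreserving (translate j)
end

section
/- Let v : ℝ² → ℝ be a C¹ function with v ∈ L²(ℝ²) ∩ L⁴(ℝ²) and |∇v| ∈ L²(ℝ²), and suppose v satisfies the interpolation inequality ∫_{ℝ²} v⁴ dx ≤ 2·(∫_{ℝ²} v² dx)·(∫_{ℝ²} |∇v|² dx). Then (∫_{ℝ²} v² dx)² ≤ 4·(∫_{ℝ²} v²/(1+|v|)² dx)·(∫_{ℝ²} v² dx)·(1 + ∫_{ℝ²} |∇v|² dx). -/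
/-!
Write `v² = f · g` with `f = |v| / (1 + |v|)` and `g = |v| (1 + |v|)`. Cauchy–Schwarz gives
`(∫ v²)² ≤ ∫ f² · ∫ g²`, where `∫ f² = ∫ v² / (1 + |v|)²` and, pointwise, `g² ≤ 2 v² + 2 v⁴`.
The interpolation inequality then bounds `∫ v⁴` by `2 ∫ v² ∫ |∇v|²`.
-/

open MeasureTheory

theorem abs_div_one_add_abs_mul_abs_mul_one_add_abs (a : ℝ) :
    |a| / (1 + |a|) * (|a| * (1 + |a|)) = a ^ 2 := by
  have : 1 + |a| ≠ 0 := by positivity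
  field_simp
  rw [sq_abs]

theorem abs_div_one_add_abs_sq (a : ℝ) : (|a| / (1 + |a|)) ^ 2 = a ^ 2 / (1 + |a|) ^ 2 := by
  rw [div_pow, sq_abs]

theorem abs_div_one_add_abs_le_abs (a : ℝ) : |a| / (1 + |a|) ≤ |a| :=
  div_le_self (abs_nonneg a) (le_add_of_nonneg_right (abs_nonneg a))

theorem sq_abs_mul_one_add_abs_le (a : ℝ) : (|a| * (1 + |a|)) ^ 2 ≤ 2 * a ^ 2 + 2 * a ^ 4 := by
  have h2 : |a| ^ 2 = a ^ 2 := sq_abs a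
  have h4 : |a| ^ 4 = a ^ 4 := by rw [show 4 = 2 * 2 by rfl, pow_mul, pow_mul, h2]
  nlinarith [abs_nonneg a, sq_nonneg (|a| * (|a| - 1))]

namespace MeasureTheory

variable {α : Type*} [MeasurableSpace α] {μ : Measure α}

theorem MemLp.inner_toLp_toLp {f g : α → ℝ} (hf : MemLp f 2 μ) (hg : MemLp g 2 μ) :
    inner ℝ (hf.toLp f) (hg.toLp g) = ∫ x, f x * g x ∂μ := by
  rw [L2.inner_def]
  refine integral_congr_ae ?_
  filter_upwards [hf.coeFn_toLp, hg.coeFn_toLp] with x hfx hgx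
  simp [hfx, hgx, mul_comm]

theorem sq_integral_mul_le_integral_sq_mul_integral_sq {f g : α → ℝ} (hf : MemLp f 2 μ)
    (hg : MemLp g 2 μ) :
    (∫ x, f x * g x ∂μ) ^ 2 ≤ (∫ x, f x ^ 2 ∂μ) * ∫ x, g x ^ 2 ∂μ := by
  simpa only [hf.inner_toLp_toLp, hg.inner_toLp_toLp, hf.inner_toLp_toLp hg, ← pow_two]
    using real_inner_mul_inner_self_le (hf.toLp f) (hg.toLp g)

theorem MemLp.integrable_pow_four {v : α → ℝ} (hv : MemLp v 4 μ) :
    Integrable (fun x => v x ^ 4) μ := by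
  simpa only [Real.norm_eq_abs, Even.pow_abs (by decide : Even 4)]
    using hv.integrable_norm_pow (p := 4) (by norm_num)

theorem sq_integral_sq_le_integral_sq_div_sq_one_add_abs_mul {v : α → ℝ} (hv2 : MemLp v 2 μ)
    (hv4 : MemLp v 4 μ) :
    (∫ x, v x ^ 2 ∂μ) ^ 2 ≤
      (∫ x, v x ^ 2 / (1 + |v x|) ^ 2 ∂μ) * (2 * (∫ x, v x ^ 2 ∂μ) + 2 * ∫ x, v x ^ 4 ∂μ) := by
  have hv2_int := hv2.integrable_sq
  have hv4_int := hv4.integrable_pow_four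
  have hv_meas := hv2.aestronglyMeasurable
  have hbound_int : Integrable (fun x => 2 * v x ^ 2 + 2 * v x ^ 4) μ :=
    (hv2_int.const_mul 2).add (hv4_int.const_mul 2)
  have hφ : Continuous fun a : ℝ => |a| / (1 + |a|) :=
    continuous_abs.div (by fun_prop) fun a => by positivity
  have hf : MemLp (fun x => |v x| / (1 + |v x|)) 2 μ :=
    hv2.of_le (hφ.comp_aestronglyMeasurable hv_meas) (.of_forall fun x => by
      simpa [abs_div, abs_of_pos (by positivity : (0 : ℝ) < 1 + |v x|)]
        using abs_div_one_add_abs_le_abs (v x))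
  have hg_sq_int : Integrable (fun x => (|v x| * (1 + |v x|)) ^ 2) μ :=
    hbound_int.mono' (by fun_prop)
      (.of_forall fun x => by
        simpa only [Real.norm_eq_abs, abs_pow, abs_mul, abs_abs,
          abs_of_pos (by positivity : (0 : ℝ) < 1 + |v x|)] using sq_abs_mul_one_add_abs_le (v x))
  have hg : MemLp (fun x => |v x| * (1 + |v x|)) 2 μ :=
    (memLp_two_iff_integrable_sq (by fun_prop)).2 hg_sq_int
  calc (∫ x, v x ^ 2 ∂μ) ^ 2
      = (∫ x, |v x| / (1 + |v x|) * (|v x| * (1 + |v x|)) ∂μ) ^ 2 := by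
        simp only [abs_div_one_add_abs_mul_abs_mul_one_add_abs]
    _ ≤ (∫ x, (|v x| / (1 + |v x|)) ^ 2 ∂μ) * ∫ x, (|v x| * (1 + |v x|)) ^ 2 ∂μ :=
        sq_integral_mul_le_integral_sq_mul_integral_sq hf hg
    _ ≤ (∫ x, v x ^ 2 / (1 + |v x|) ^ 2 ∂μ) * ∫ x, 2 * v x ^ 2 + 2 * v x ^ 4 ∂μ := by
        simp only [abs_div_one_add_abs_sq]
        gcongr ?_ * ?_
        exact integral_mono hg_sq_int hbound_int fun x => sq_abs_mul_one_add_abs_le (v x)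
    _ = _ := by
        rw [integral_add (hv2_int.const_mul 2) (hv4_int.const_mul 2), integral_const_mul,
          integral_const_mul]

end MeasureTheory

theorem interpolation_consequence_general
    (v : EuclideanSpace ℝ (Fin 2) → ℝ)
    (hv2 : MemLp v 2 volume) (hv4 : MemLp v 4 volume)
    (hinterp : (∫ x, (v x) ^ 4) ≤
      2 * (∫ x, (v x) ^ 2) * (∫ x, ‖fderiv ℝ v x‖ ^ 2)) :
    (∫ x, (v x) ^ 2) ^ 2 ≤
      4 * (∫ x, (v x) ^ 2 / (1 + |v x|) ^ 2) * (∫ x, (v x) ^ 2)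
        * (1 + ∫ x, ‖fderiv ℝ v x‖ ^ 2) := by
  have hA : 0 ≤ ∫ x, v x ^ 2 / (1 + |v x|) ^ 2 := integral_nonneg fun x => by positivity
  have hB : 0 ≤ ∫ x, v x ^ 2 := integral_nonneg fun x => by positivity
  calc (∫ x, v x ^ 2) ^ 2
      ≤ (∫ x, v x ^ 2 / (1 + |v x|) ^ 2) * (2 * (∫ x, v x ^ 2) + 2 * ∫ x, v x ^ 4) :=
        sq_integral_sq_le_integral_sq_div_sq_one_add_abs_mul hv2 hv4
    _ ≤ (∫ x, v x ^ 2 / (1 + |v x|) ^ 2) *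
          (2 * (∫ x, v x ^ 2) + 2 * (2 * (∫ x, v x ^ 2) * ∫ x, ‖fderiv ℝ v x‖ ^ 2)) := by
        gcongr
    _ ≤ _ := by nlinarith [mul_nonneg hA hB]

/-- If `v : ℝ² → ℝ` is `C¹` with `v ∈ L² ∩ L⁴`, `|∇v| ∈ L²`, and `v`
satisfies the two-dimensional interpolation inequality `∫v⁴ ≤ 2(∫v²)(∫|∇v|²)`, then
`(∫v²)² ≤ 4·(∫ v²/(1+|v|)²)·(∫v²)·(1 + ∫|∇v|²)`. -/
theorem interpolation_consequence
    (v : EuclideanSpace ℝ (Fin 2) → ℝ)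
    (hv : ContDiff ℝ 1 v)
    (hv2 : MemLp v 2 volume) (hv4 : MemLp v 4 volume)
    (hgrad : MemLp (fun x => ‖fderiv ℝ v x‖) 2 volume)
    (hinterp : (∫ x, (v x) ^ 4) ≤
      2 * (∫ x, (v x) ^ 2) * (∫ x, ‖fderiv ℝ v x‖ ^ 2)) :
    (∫ x, (v x) ^ 2) ^ 2 ≤
      4 * (∫ x, (v x) ^ 2 / (1 + |v x|) ^ 2) * (∫ x, (v x) ^ 2)
        * (1 + ∫ x, ‖fderiv ℝ v x‖ ^ 2) :=
  interpolation_consequence_general v hv2 hv4 hinterp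
end

section
/- Let f ∈ L²(ℝ²) be a measurable function, and suppose there exists M ≥ 0 such that f ∈ L^k(ℝ²) with ‖f‖_{L^k} ≤ (π·(k/2 − 1))^{(k−2)/(2k)}·M for every integer k ≥ 3. Then the function e^f − 1 belongs to L²(ℝ²), the series Σ_{k=3}^{∞} ((2^k − 2)/k!)·(π·(k/2 − 1))^{(k−2)/2}·M^k converges, and ‖e^f − 1‖_{L²}² ≤ ‖f‖_{L²}² + Σ_{k=3}^{∞} ((2^k − 2)/k!)·(π·(k/2 − 1))^{(k−2)/2}·M^k. -/
/-!
Since `|e^t - 1| ≤ e^{|t|} - 1` and `(e^s - 1)^2 = e^{2s} - 2e^s + 1`, comparing Taylor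
series gives `(e^t - 1)^2 ≤ t^2 + ∑_{k ≥ 3} (2^k - 2)/k! |t|^k` with nonnegative terms.
Integrating term by term (monotone convergence) and inserting the bounds on `∫ |f|^k` gives
the estimate. The series of bounds converges because, by `k^k ≤ e^k k!`, the square of its
`k`-th term is at most `(4πeM²)^k / k!`.
-/

open MeasureTheory Real Finset
open scoped Nat

theorem HasSum.ite_le {G : Type*} [AddCommGroup G] [TopologicalSpace G] [IsTopologicalAddGroup G]
    {f : ℕ → G} {g : G} (h : HasSum f g) (n : ℕ) :
    HasSum (fun k => if n ≤ k then f k else 0) (g - ∑ k ∈ range n, f k) := by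
  have hhead : ∑ k ∈ range n, (if n ≤ k then f k else 0) = 0 :=
    sum_eq_zero fun k hk => if_neg (by simpa using hk)
  rw [← hasSum_nat_add_iff' n, hhead, sub_zero]
  simpa using (hasSum_nat_add_iff' n).2 h

theorem hasSum_two_pow_sub_two_div_factorial_mul_pow (t : ℝ) :
    HasSum (fun k : ℕ => (2 ^ k - 2 : ℝ) / k ! * t ^ k) ((exp t - 1) ^ 2 - 1) := by
  have hcoeff (k : ℕ) :
      (2 ^ k - 2 : ℝ) / k ! * t ^ k = (2 * t) ^ k / (k ! : ℝ) - 2 * (t ^ k / k !) := by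
    ring
  have h := (NormedSpace.expSeries_div_hasSum_exp (2 * t)).sub
    ((NormedSpace.expSeries_div_hasSum_exp t).mul_left 2)
  rw [← exp_eq_exp_ℝ] at h
  rwa [funext hcoeff, show (exp t - 1) ^ 2 - 1 = exp (2 * t) - 2 * exp t by
    rw [two_mul, exp_add]; ring]

theorem hasSum_sq_exp_sub_one_sub_sq (t : ℝ) :
    HasSum (fun k : ℕ => if 3 ≤ k then (2 ^ k - 2 : ℝ) / k ! * t ^ k else 0)
      ((exp t - 1) ^ 2 - t ^ 2) := by
  have h := (hasSum_two_pow_sub_two_div_factorial_mul_pow t).ite_le 3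
  norm_num [sum_range_succ] at h
  rwa [show (exp t - 1) ^ 2 - 1 - (-1 + t ^ 2) = (exp t - 1) ^ 2 - t ^ 2 by ring] at h

theorem two_pow_sub_two_div_factorial_nonneg {k : ℕ} (hk : 1 ≤ k) :
    0 ≤ (2 ^ k - 2 : ℝ) / k ! :=
  div_nonneg (sub_nonneg.2 (le_self_pow₀ one_le_two (by omega))) (by positivity)

theorem abs_exp_sub_one_le_exp_abs_sub_one (t : ℝ) : |exp t - 1| ≤ exp |t| - 1 := by
  rcases le_total 0 t with ht | ht
  · rw [abs_of_nonneg ht, abs_of_nonneg (by simpa using exp_le_exp.2 ht)]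
  · rw [abs_of_nonpos ht, abs_of_nonpos (by simpa using exp_le_exp.2 ht)]
    linarith [add_one_le_exp t, add_one_le_exp (-t)]

theorem sq_exp_sub_one_le_sq_exp_abs_sub_one (t : ℝ) : (exp t - 1) ^ 2 ≤ (exp |t| - 1) ^ 2 := by
  simpa only [sq_abs] using
    pow_le_pow_left₀ (abs_nonneg _) (abs_exp_sub_one_le_exp_abs_sub_one t) 2

-- The terms are dominated by `(2y)^k / k! + 2^{-k}`, since `x ≤ x^2 + 1` for `x = 2^k |T k|`.
theorem summable_of_sq_le_pow_div_factorial {T : ℕ → ℝ} (y : ℝ)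
    (h : ∀ k, T k ^ 2 ≤ y ^ k / k !) : Summable T := by
  refine ((summable_pow_div_factorial (2 * y)).add
    (summable_geometric_of_lt_one (by norm_num) (by norm_num : (1 / 2 : ℝ) < 1))).of_norm_bounded
    fun k => ?_
  have h2k : (0 : ℝ) < 2 ^ k := by positivity
  calc ‖T k‖ ≤ 2 ^ k * T k ^ 2 + (1 / 2) ^ k := by
        rw [Real.norm_eq_abs, ← sq_abs (T k), one_div_pow, ← sub_nonneg]
        field_simp
        nlinarith [sq_nonneg (2 ^ k * |T k| - 1)]
    _ ≤ 2 ^ k * (y ^ k / k !) + (1 / 2) ^ k := by gcongr; exact h k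
    _ = (2 * y) ^ k / k ! + (1 / 2) ^ k := by ring

theorem pow_le_exp_mul_factorial (n : ℕ) : (n : ℝ) ^ n ≤ exp n * n ! := by
  rw [← div_le_iff₀ (by positivity)]
  exact pow_div_factorial_le_exp _ n.cast_nonneg n

theorem rpow_div_natCast_pow {x : ℝ} (hx : 0 ≤ x) (r : ℝ) {n : ℕ} (hn : n ≠ 0) :
    (x ^ (r / n)) ^ n = x ^ r := by
  rw [← rpow_natCast, ← rpow_mul hx, div_mul_cancel₀ _ (Nat.cast_ne_zero.2 hn)]

theorem sq_pi_mul_half_sub_one_rpow_le (k : ℕ) (hk : 2 ≤ k) :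
    ((π * ((k : ℝ) / 2 - 1)) ^ (((k : ℝ) - 2) / 2)) ^ 2 ≤ (π * k) ^ k := by
  have hk' : (2 : ℝ) ≤ k := by exact_mod_cast hk
  have h0 : 0 ≤ π * ((k : ℝ) / 2 - 1) := by nlinarith [pi_pos]
  have h1 : 1 ≤ π * k := by nlinarith [pi_gt_three]
  calc ((π * ((k : ℝ) / 2 - 1)) ^ (((k : ℝ) - 2) / 2)) ^ 2
      ≤ ((π * k) ^ ((k : ℝ) / 2)) ^ 2 := by
        gcongr
        calc (π * ((k : ℝ) / 2 - 1)) ^ (((k : ℝ) - 2) / 2)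
            ≤ (π * k) ^ (((k : ℝ) - 2) / 2) := by gcongr; linarith
          _ ≤ (π * k) ^ ((k : ℝ) / 2) := by gcongr; linarith
    _ = (π * k) ^ k := by
        rw [← rpow_natCast, ← rpow_mul (by positivity)]
        norm_num

noncomputable def expSubOneSqBoundTerm (M : ℝ) (k : ℕ) : ℝ :=
  if 3 ≤ k then
    (2 ^ k - 2 : ℝ) / k ! * (π * ((k : ℝ) / 2 - 1)) ^ (((k : ℝ) - 2) / 2) * M ^ k
  else 0

theorem sq_expSubOneSqBoundTerm_le (M : ℝ) (k : ℕ) :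
    expSubOneSqBoundTerm M k ^ 2 ≤ (4 * π * exp 1 * M ^ 2) ^ k / k ! := by
  unfold expSubOneSqBoundTerm
  split_ifs with hk
  swap
  · rw [zero_pow two_ne_zero]
    positivity
  have hcoeff := two_pow_sub_two_div_factorial_nonneg (k := k) (by omega)
  calc ((2 ^ k - 2 : ℝ) / k ! * (π * ((k : ℝ) / 2 - 1)) ^ (((k : ℝ) - 2) / 2) * M ^ k) ^ 2
      = ((2 ^ k - 2 : ℝ) / k !) ^ 2 * ((π * ((k : ℝ) / 2 - 1)) ^ (((k : ℝ) - 2) / 2)) ^ 2 *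
          (M ^ 2) ^ k := by ring
    _ ≤ ((2 ^ k : ℝ) / k !) ^ 2 * (π * k) ^ k * (M ^ 2) ^ k := by
        gcongr
        · linarith
        · exact sq_pi_mul_half_sub_one_rpow_le k (by omega)
    _ = (4 * π * M ^ 2) ^ k * (k : ℝ) ^ k / k ! / k ! := by
        rw [div_pow, ← pow_mul, mul_comm k, pow_mul]
        ring
    _ ≤ (4 * π * M ^ 2) ^ k * (exp k * k !) / k ! / k ! := by
        gcongr
        exact pow_le_exp_mul_factorial k
    _ = (4 * π * exp 1 * M ^ 2) ^ k / k ! := by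
        rw [← exp_one_pow]
        field_simp
        ring

theorem mul_le_expSubOneSqBoundTerm {k : ℕ} (hk : 3 ≤ k) {I M : ℝ}
    (hI : I ≤ ((π * ((k : ℝ) / 2 - 1)) ^ (((k : ℝ) - 2) / (2 * k)) * M) ^ k) :
    (2 ^ k - 2 : ℝ) / k ! * I ≤ expSubOneSqBoundTerm M k := by
  have hbase : 0 ≤ π * ((k : ℝ) / 2 - 1) := by
    have : (3 : ℝ) ≤ k := by exact_mod_cast hk
    nlinarith [pi_pos]
  rw [mul_pow, ← div_div, rpow_div_natCast_pow hbase _ (by omega)] at hI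
  rw [expSubOneSqBoundTerm, if_pos hk, mul_assoc]
  exact mul_le_mul_of_nonneg_left hI (two_pow_sub_two_div_factorial_nonneg (by omega))

theorem summable_expSubOneSqBoundTerm (M : ℝ) : Summable (expSubOneSqBoundTerm M) :=
  summable_of_sq_le_pow_div_factorial _ (sq_expSubOneSqBoundTerm_le M)

theorem integrable_and_integral_le_tsum_of_hasSum {α : Type*} [MeasurableSpace α]
    {μ : Measure α} {u : ℕ → α → ℝ} {g : α → ℝ} {b : ℕ → ℝ}
    (hg : ∀ x, HasSum (fun k => u k x) (g x)) (hu_nonneg : ∀ k x, 0 ≤ u k x)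
    (hu : ∀ k, Integrable (u k) μ) (hub : ∀ k, ∫ x, u k x ∂μ ≤ b k) (hb : Summable b) :
    Integrable g μ ∧ ∫ x, g x ∂μ ≤ ∑' k, b k := by
  have hint_nonneg (k : ℕ) : 0 ≤ ∫ x, u k x ∂μ := integral_nonneg (hu_nonneg k)
  have hsum : Summable fun k => ∫ x, u k x ∂μ := hb.of_nonneg_of_le hint_nonneg hub
  have hg_nonneg (x : α) : 0 ≤ g x := (hg x).nonneg (hu_nonneg · x)
  have hlint :
      ∫⁻ x, ENNReal.ofReal (g x) ∂μ = ENNReal.ofReal (∑' k, ∫ x, u k x ∂μ) := by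
    simp_rw [← (hg _).tsum_eq,
      ENNReal.ofReal_tsum_of_nonneg (fun k => hu_nonneg k _) (hg _).summable]
    rw [lintegral_tsum fun k => (hu k).1.aemeasurable.ennreal_ofReal,
      ENNReal.ofReal_tsum_of_nonneg hint_nonneg hsum]
    congr with k
    exact (ofReal_integral_eq_lintegral_ofReal (hu k) (ae_of_all _ (hu_nonneg k))).symm
  have hg_meas : AEStronglyMeasurable g μ :=
    aestronglyMeasurable_of_tendsto_ae Filter.atTop
      (fun n => Finset.aestronglyMeasurable_fun_sum _ fun k _ => (hu k).1)
      (ae_of_all _ fun x => (hg x).tendsto_sum_nat)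
  refine ⟨⟨hg_meas, (hasFiniteIntegral_iff_ofReal (ae_of_all _ hg_nonneg)).2
    (hlint ▸ ENNReal.ofReal_lt_top)⟩, ?_⟩
  calc ∫ x, g x ∂μ = (∫⁻ x, ENNReal.ofReal (g x) ∂μ).toReal :=
        integral_eq_lintegral_of_nonneg_ae (ae_of_all _ hg_nonneg) hg_meas
    _ = ∑' k, ∫ x, u k x ∂μ := by rw [hlint, ENNReal.toReal_ofReal (tsum_nonneg hint_nonneg)]
    _ ≤ ∑' k, b k := hsum.tsum_le_tsum hub hb

theorem integrable_and_integral_sq_exp_abs_sub_one_sub_sq_le {α : Type*}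
    [MeasurableSpace α] {μ : Measure α} {f : α → ℝ} (M : ℝ)
    (hfk : ∀ k : ℕ, 3 ≤ k → Integrable (fun x => |f x| ^ k) μ ∧
      ∫ x, |f x| ^ k ∂μ ≤ ((π * ((k : ℝ) / 2 - 1)) ^ (((k : ℝ) - 2) / (2 * k)) * M) ^ k) :
    Integrable (fun x => (exp |f x| - 1) ^ 2 - |f x| ^ 2) μ ∧
      ∫ x, (exp |f x| - 1) ^ 2 - |f x| ^ 2 ∂μ ≤ ∑' k, expSubOneSqBoundTerm M k := by
  refine integrable_and_integral_le_tsum_of_hasSum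
    (fun x => hasSum_sq_exp_sub_one_sub_sq |f x|) (fun k x => ?_) (fun k => ?_) (fun k => ?_)
    (summable_expSubOneSqBoundTerm M)
  · split_ifs with hk
    exacts [mul_nonneg (two_pow_sub_two_div_factorial_nonneg (by omega)) (by positivity), le_rfl]
  · by_cases hk : 3 ≤ k
    · simpa only [hk, if_true] using (hfk k hk).1.const_mul _
    · simp [hk]
  · by_cases hk : 3 ≤ k
    · simpa only [hk, if_true, integral_const_mul] using
        mul_le_expSubOneSqBoundTerm hk (hfk k hk).2
    · simp [expSubOneSqBoundTerm, hk]

theorem exp_sub_one_mem_L2_general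
    (f : EuclideanSpace ℝ (Fin 2) → ℝ) (M : ℝ)
    (hf2 : MemLp f 2 volume)
    (hfk : ∀ k : ℕ, 3 ≤ k →
      Integrable (fun x => |f x| ^ k) ∧
      (∫ x, |f x| ^ k) ≤
        ((Real.pi * ((k : ℝ) / 2 - 1)) ^ (((k : ℝ) - 2) / (2 * k)) * M) ^ k) :
    MemLp (fun x => Real.exp (f x) - 1) 2 volume ∧
    Summable (fun k : ℕ => if 3 ≤ k then
        ((2 ^ k - 2 : ℝ) / (Nat.factorial k)) *
          (Real.pi * ((k : ℝ) / 2 - 1)) ^ (((k : ℝ) - 2) / 2) * M ^ k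
      else 0) ∧
    (∫ x, (Real.exp (f x) - 1) ^ 2) ≤
      (∫ x, (f x) ^ 2) +
        ∑' k : ℕ, (if 3 ≤ k then
          ((2 ^ k - 2 : ℝ) / (Nat.factorial k)) *
            (Real.pi * ((k : ℝ) / 2 - 1)) ^ (((k : ℝ) - 2) / 2) * M ^ k
        else 0) := by
  obtain ⟨hg, hg_le⟩ := integrable_and_integral_sq_exp_abs_sub_one_sub_sq_le M hfk
  have hf_sq : Integrable (fun x => f x ^ 2) := (memLp_two_iff_integrable_sq hf2.1).1 hf2
  have hmeas : AEStronglyMeasurable (fun x => exp (f x) - 1) :=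
    (continuous_exp.comp_aestronglyMeasurable hf2.1).sub aestronglyMeasurable_const
  have hdom (x) : (exp (f x) - 1) ^ 2 ≤ f x ^ 2 + ((exp |f x| - 1) ^ 2 - |f x| ^ 2) := by
    rw [sq_abs, add_sub_cancel]
    exact sq_exp_sub_one_le_sq_exp_abs_sub_one (f x)
  have hint : Integrable (fun x => (exp (f x) - 1) ^ 2) :=
    (hf_sq.add hg).mono' (hmeas.pow 2) (ae_of_all _ fun x => by
      rw [Real.norm_of_nonneg (sq_nonneg _)]
      exact hdom x)
  refine ⟨(memLp_two_iff_integrable_sq hmeas).2 hint, summable_expSubOneSqBoundTerm M, ?_⟩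
  calc ∫ x, (exp (f x) - 1) ^ 2
      ≤ ∫ x, f x ^ 2 + ((exp |f x| - 1) ^ 2 - |f x| ^ 2) :=
        integral_mono hint (hf_sq.add hg) hdom
    _ = (∫ x, f x ^ 2) + ∫ x, (exp |f x| - 1) ^ 2 - |f x| ^ 2 := integral_add hf_sq hg
    _ ≤ _ := by gcongr; exact hg_le

/-- Let `f ∈ L²(ℝ²)` and suppose there is `M ≥ 0` such that for every
integer `k ≥ 3`, `f ∈ L^k(ℝ²)` with `‖f‖_{L^k} ≤ (π(k/2 − 1))^{(k−2)/(2k)}·M`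
(equivalently `∫|f|^k ≤ ((π(k/2 − 1))^{(k−2)/(2k)}·M)^k`). Then `e^f − 1 ∈ L²(ℝ²)`,
the series `Σ_{k≥3} ((2^k−2)/k!)(π(k/2−1))^{(k−2)/2} M^k` converges, and
`‖e^f − 1‖₂² ≤ ‖f‖₂² + Σ_{k≥3} ((2^k−2)/k!)(π(k/2−1))^{(k−2)/2} M^k`. -/
theorem exp_sub_one_mem_L2
    (f : EuclideanSpace ℝ (Fin 2) → ℝ) (M : ℝ) (hM : 0 ≤ M)
    (hf2 : MemLp f 2 volume)
    (hfk : ∀ k : ℕ, 3 ≤ k →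
      Integrable (fun x => |f x| ^ k) ∧
      (∫ x, |f x| ^ k) ≤
        ((Real.pi * ((k : ℝ) / 2 - 1)) ^ (((k : ℝ) - 2) / (2 * k)) * M) ^ k) :
    MemLp (fun x => Real.exp (f x) - 1) 2 volume ∧
    Summable (fun k : ℕ => if 3 ≤ k then
        ((2 ^ k - 2 : ℝ) / (Nat.factorial k)) *
          (Real.pi * ((k : ℝ) / 2 - 1)) ^ (((k : ℝ) - 2) / 2) * M ^ k
      else 0) ∧
    (∫ x, (Real.exp (f x) - 1) ^ 2) ≤
      (∫ x, (f x) ^ 2) +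
        ∑' k : ℕ, (if 3 ≤ k then
          ((2 ^ k - 2 : ℝ) / (Nat.factorial k)) *
            (Real.pi * ((k : ℝ) / 2 - 1)) ^ (((k : ℝ) - 2) / 2) * M ^ k
        else 0) :=
  exp_sub_one_mem_L2_general f M hf2 hfk
end

section
/- Let w : ℝ² → ℝ be a C² function such that w, both first partial derivatives of w, and all second partial derivatives of w belong to L²(ℝ²). Then w tends to zero uniformly at infinity: lim_{R→∞} sup_{|x| = R} |w(x)| = 0. -/
/-!
Apply the fundamental theorem of calculus twice to `F = w²` in Cartesian coordinates `(a, b)`: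
along the first coordinate `F(a, b) = -∫_{t > a} ∂₁F(t, b) dt`, and along the second
`|∂₁F(t, s)| ≤ ∫ |∂₂∂₁F(t, ·)|`, so that `|F(a, b)| ≤ ∫_{t > a} ∫ |∂₂∂₁F(t, s)| ds dt`, and
likewise over `t < a`. Here `∂₁F = 2 w ∂₁w` and `∂₂∂₁F = 2 (∂₂w ∂₁w + w ∂₂∂₁w)` are integrable,
being sums of products of `L²` functions, so these tail integrals vanish as `|a| → ∞`, uniformly
in `b`. Exchanging the coordinates handles `|b| → ∞`, hence `w → 0` along the cocompact filter,
which is uniform decay on spheres.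
-/

open MeasureTheory Filter Set Topology

theorem abs_le_integral_Ioi_abs_of_hasDerivAt {f f' : ℝ → ℝ} (hf : ∀ t, HasDerivAt f (f' t) t)
    (hfi : Integrable f) (hf'i : Integrable f') (a : ℝ) :
    |f a| ≤ ∫ t in Ioi a, |f' t| := by
  have hlim := tendsto_zero_of_hasDerivAt_of_integrableOn_Ioi (a := a) (fun t _ => hf t)
    hf'i.integrableOn hfi.integrableOn
  have hFTC := integral_Ioi_of_hasDerivAt_of_tendsto' (a := a) (fun t _ => hf t)
    hf'i.integrableOn hlim
  rw [zero_sub] at hFTC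
  rw [← abs_neg, ← hFTC]
  exact abs_integral_le_integral_abs

theorem abs_le_integral_Iic_abs_of_hasDerivAt {f f' : ℝ → ℝ} (hf : ∀ t, HasDerivAt f (f' t) t)
    (hfi : Integrable f) (hf'i : Integrable f') (a : ℝ) :
    |f a| ≤ ∫ t in Iic a, |f' t| := by
  have hlim := tendsto_zero_of_hasDerivAt_of_integrableOn_Iic (a := a) (fun t _ => hf t)
    hf'i.integrableOn hfi.integrableOn
  have hFTC := integral_Iic_of_hasDerivAt_of_tendsto' (a := a) (fun t _ => hf t)
    hf'i.integrableOn hlim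
  rw [sub_zero] at hFTC
  rw [← hFTC]
  exact abs_integral_le_integral_abs

theorem IsClosed.forall_of_ae {X : Type*} [TopologicalSpace X] [MeasurableSpace X]
    {μ : Measure X} [μ.IsOpenPosMeasure] {p : X → Prop} (hp : IsClosed {x | p x})
    (h : ∀ᵐ x ∂μ, p x) (x : X) : p x := by
  have : {x | p x} = univ := hp.closure_eq ▸ (Measure.dense_of_ae h).closure_eq
  exact this.ge (mem_univ x)

section PartialDerivatives

variable {F F₁ F₁₂ : ℝ × ℝ → ℝ}

theorem ae_forall_abs_le_integral_abs
    (hF₁₂ : ∀ a b, HasDerivAt (fun s => F₁ (a, s)) (F₁₂ (a, b)) b)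
    (hF₁i : Integrable F₁) (hF₁₂i : Integrable F₁₂) :
    ∀ᵐ t, ∀ s, |F₁ (t, s)| ≤ ∫ s', |F₁₂ (t, s')| := by
  filter_upwards [hF₁i.prod_right_ae, hF₁₂i.prod_right_ae] with t h₁ h₁₂ s
  calc |F₁ (t, s)| ≤ ∫ s' in Ioi s, |F₁₂ (t, s')| :=
        abs_le_integral_Ioi_abs_of_hasDerivAt (hF₁₂ t) h₁ h₁₂ s
    _ ≤ ∫ s', |F₁₂ (t, s')| :=
        setIntegral_le_integral h₁₂.abs (Eventually.of_forall fun _ => abs_nonneg _)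

theorem abs_le_integral_Ioi_and_integral_Iic (hF : Continuous F)
    (hF₁ : ∀ a b, HasDerivAt (fun t => F (t, b)) (F₁ (a, b)) a)
    (hF₁₂ : ∀ a b, HasDerivAt (fun s => F₁ (a, s)) (F₁₂ (a, b)) b)
    (hFi : Integrable F) (hF₁i : Integrable F₁) (hF₁₂i : Integrable F₁₂) (a b : ℝ) :
    |F (a, b)| ≤ ∫ t in Ioi a, ∫ s, |F₁₂ (t, s)| ∧
      |F (a, b)| ≤ ∫ t in Iic a, ∫ s, |F₁₂ (t, s)| := by
  set G := fun t => ∫ s, |F₁₂ (t, s)|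
  have hG : Integrable G := by simpa using hF₁₂i.integral_norm_prod_left
  have hF₁G := ae_forall_abs_le_integral_abs hF₁₂ hF₁i hF₁₂i
  -- The slices `F (·, b)` and `F₁ (·, b)` are integrable only for almost every `b`;
  -- continuity of `F` carries the bound to every `b`.
  have hFa : Continuous fun b => |F (a, b)| := by fun_prop
  refine IsClosed.forall_of_ae (μ := volume)
    (p := fun b => |F (a, b)| ≤ ∫ t in Ioi a, G t ∧ |F (a, b)| ≤ ∫ t in Iic a, G t)
    ((isClosed_le hFa continuous_const).inter (isClosed_le hFa continuous_const)) ?_ b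
  filter_upwards [hFi.prod_left_ae, hF₁i.prod_left_ae] with b' hb hb₁
  have mono (S : Set ℝ) : ∫ t in S, |F₁ (t, b')| ≤ ∫ t in S, G t :=
    integral_mono_ae hb₁.abs.integrableOn hG.integrableOn
      (ae_restrict_of_ae (hF₁G.mono fun t ht => ht b'))
  exact ⟨(abs_le_integral_Ioi_abs_of_hasDerivAt (hF₁ · b') hb hb₁ a).trans (mono _),
    (abs_le_integral_Iic_abs_of_hasDerivAt (hF₁ · b') hb hb₁ a).trans (mono _)⟩

theorem tendsto_comap_fst_cocompact_of_hasDerivAt (hF : Continuous F)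
    (hF₁ : ∀ a b, HasDerivAt (fun t => F (t, b)) (F₁ (a, b)) a)
    (hF₁₂ : ∀ a b, HasDerivAt (fun s => F₁ (a, s)) (F₁₂ (a, b)) b)
    (hFi : Integrable F) (hF₁i : Integrable F₁) (hF₁₂i : Integrable F₁₂) :
    Tendsto F (comap Prod.fst (cocompact ℝ)) (𝓝 0) := by
  have hbound := abs_le_integral_Ioi_and_integral_Iic hF hF₁ hF₁₂ hFi hF₁i hF₁₂i
  rw [cocompact_eq_atBot_atTop, comap_sup, tendsto_sup]
  exact ⟨squeeze_zero_norm (fun p => (hbound p.1 p.2).2) (tendsto_integral_Iic_zero tendsto_comap),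
    squeeze_zero_norm (fun p => (hbound p.1 p.2).1) (tendsto_integral_Ioi_zero tendsto_comap)⟩

end PartialDerivatives

section LinearCoordinates

variable {E F : Type*} [NormedAddCommGroup E] [NormedSpace ℝ E] [NormedAddCommGroup F]
  [NormedSpace ℝ F] (L : ℝ × ℝ →L[ℝ] E) {φ : E → F} {a b : ℝ}

theorem DifferentiableAt.hasDerivAt_comp_clm_fst (hφ : DifferentiableAt ℝ φ (L (a, b))) :
    HasDerivAt (fun t => φ (L (t, b))) (fderiv ℝ φ (L (a, b)) (L (1, 0))) a :=
  hφ.hasFDerivAt.comp_hasDerivAt a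
    (L.hasFDerivAt.comp_hasDerivAt a ((hasDerivAt_id a).prodMk (hasDerivAt_const a b)))

theorem DifferentiableAt.hasDerivAt_comp_clm_snd (hφ : DifferentiableAt ℝ φ (L (a, b))) :
    HasDerivAt (fun s => φ (L (a, s))) (fderiv ℝ φ (L (a, b)) (L (0, 1))) b :=
  hφ.hasFDerivAt.comp_hasDerivAt b
    (L.hasFDerivAt.comp_hasDerivAt b ((hasDerivAt_const b a).prodMk (hasDerivAt_id b)))

end LinearCoordinates

theorem tendsto_zero_of_tendsto_mul_self_zero {α : Type*} {l : Filter α} {g : α → ℝ}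
    (h : Tendsto (fun x => g x * g x) l (𝓝 0)) : Tendsto g l (𝓝 0) := by
  rw [tendsto_zero_iff_abs_tendsto_zero]
  simpa [Function.comp_def, Real.sqrt_mul_self_eq_abs] using h.sqrt

theorem tendsto_comp_comap_fst_cocompact_of_memLp {E : Type*} [NormedAddCommGroup E]
    [NormedSpace ℝ E] [MeasurableSpace E] {μ : Measure E} {w : E → ℝ} (hw : ContDiff ℝ 2 w)
    {L : ℝ × ℝ →L[ℝ] E} (hL : MeasurePreserving L volume μ) (hw₂ : MemLp w 2 μ)
    (hu : MemLp (fun x => fderiv ℝ w x (L (1, 0))) 2 μ)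
    (hv : MemLp (fun x => fderiv ℝ w x (L (0, 1))) 2 μ)
    (huv : MemLp (fun x => fderiv ℝ (fun y => fderiv ℝ w y (L (1, 0))) x (L (0, 1))) 2 μ) :
    Tendsto (w ∘ L) (comap Prod.fst (cocompact ℝ)) (𝓝 0) := by
  set wu := fun y => fderiv ℝ w y (L (1, 0))
  set wv := fun y => fderiv ℝ w y (L (0, 1))
  set wuv := fun x => fderiv ℝ wu x (L (0, 1))
  have hw_diff : Differentiable ℝ w := hw.differentiable two_ne_zero
  have hwu_diff : Differentiable ℝ wu :=
    ((hw.fderiv_right (m := 1) le_rfl).clm_apply contDiff_const).differentiable one_ne_zero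
  have hmul {g h : E → ℝ} (hg : MemLp g 2 μ) (hh : MemLp h 2 μ) :
      Integrable (fun p => g (L p) * h (L p)) :=
    (hg.comp_measurePreserving hL).integrable_mul (hh.comp_measurePreserving hL)
  apply tendsto_zero_of_tendsto_mul_self_zero
  refine tendsto_comap_fst_cocompact_of_hasDerivAt
    (F₁ := fun p => wu (L p) * w (L p) + w (L p) * wu (L p))
    (F₁₂ := fun p => (wuv (L p) * w (L p) + wu (L p) * wv (L p)) +
      (wv (L p) * wu (L p) + w (L p) * wuv (L p)))
    (by fun_prop) (fun a b => ?_) (fun a b => ?_) (hmul hw₂ hw₂)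
    ((hmul hu hw₂).add (hmul hw₂ hu))
    (((hmul huv hw₂).add (hmul hu hv)).add ((hmul hv hu).add (hmul hw₂ huv)))
  · have hw' := (hw_diff (L (a, b))).hasDerivAt_comp_clm_fst L
    exact hw'.mul hw'
  · have hw' := (hw_diff (L (a, b))).hasDerivAt_comp_clm_snd L
    have hwu' := (hwu_diff (L (a, b))).hasDerivAt_comp_clm_snd L
    exact (hwu'.mul hw').add (hw'.mul hwu')

theorem tendsto_cocompact_prod_of_comap_fst {X Z : Type*} [TopologicalSpace X]
    {g : X × X → Z} {l : Filter Z} (h : Tendsto g (comap Prod.fst (cocompact X)) l)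
    (h_swap : Tendsto (g ∘ Prod.swap) (comap Prod.fst (cocompact X)) l) :
    Tendsto g (cocompact (X × X)) l := by
  rw [← coprod_cocompact, Filter.coprod, tendsto_sup]
  have hswap : Tendsto (Prod.swap : X × X → X × X) (comap Prod.snd (cocompact X))
      (comap Prod.fst (cocompact X)) :=
    tendsto_comap_iff.2 tendsto_comap
  exact ⟨h, h_swap.comp hswap⟩

theorem tendsto_iSup_sphere_of_tendsto_cobounded {E : Type*} [NormedAddCommGroup E]
    {f : E → ℝ} (h : Tendsto f (Bornology.cobounded E) (𝓝 0)) :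
    Tendsto (fun R : ℝ => ⨆ x : Metric.sphere (0 : E) R, |f x|) atTop (𝓝 0) := by
  rw [Metric.tendsto_atTop]
  intro ε hε
  obtain ⟨r, -, hr⟩ := (hasBasis_cobounded_norm.tendsto_iff Metric.nhds_basis_ball).1 h
    (ε / 2) (half_pos hε)
  refine ⟨r, fun R hR => ?_⟩
  have hsup : ⨆ x : Metric.sphere (0 : E) R, |f x| ≤ ε / 2 := by
    refine Real.iSup_le (fun x => ?_) (half_pos hε).le
    have hx : r ≤ ‖(x : E)‖ := by rw [← dist_zero_right, x.2]; exact hR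
    exact (mem_ball_zero_iff.1 (hr x hx)).le
  rw [Real.dist_eq, sub_zero, abs_of_nonneg (Real.iSup_nonneg fun _ => abs_nonneg _)]
  linarith

noncomputable def euclideanPlaneEquiv : (ℝ × ℝ) ≃L[ℝ] EuclideanSpace ℝ (Fin 2) :=
  (ContinuousLinearEquiv.finTwoArrow ℝ ℝ).symm.trans (EuclideanSpace.equiv (Fin 2) ℝ).symm

theorem euclideanPlaneEquiv_measurePreserving :
    MeasurePreserving euclideanPlaneEquiv volume volume :=
  (PiLp.volume_preserving_toLp (Fin 2)).comp
    ((volume_preserving_finTwoArrow ℝ).symm MeasurableEquiv.finTwoArrow)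

@[simp]
theorem euclideanPlaneEquiv_one_zero :
    euclideanPlaneEquiv (1, 0) = EuclideanSpace.single 0 1 := by
  ext i; fin_cases i <;> rfl

@[simp]
theorem euclideanPlaneEquiv_zero_one :
    euclideanPlaneEquiv (0, 1) = EuclideanSpace.single 1 1 := by
  ext i; fin_cases i <;> rfl

/-- If `w : ℝ² → ℝ` is `C²` and `w`, both first partial derivatives of
`w`, and all second partial derivatives of `w` belong to `L²(ℝ²)`, then `w` tends to zero
uniformly at infinity: `lim_{R→∞} sup_{|x|=R} |w(x)| = 0`. -/
theorem W22_uniform_decay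
    (w : EuclideanSpace ℝ (Fin 2) → ℝ)
    (hw : ContDiff ℝ 2 w)
    (hw2 : MemLp w 2 volume)
    (hw1 : ∀ i : Fin 2,
      MemLp (fun x => fderiv ℝ w x (EuclideanSpace.single i 1)) 2 volume)
    (hw11 : ∀ i j : Fin 2,
      MemLp (fun x =>
        fderiv ℝ (fun y => fderiv ℝ w y (EuclideanSpace.single i 1)) x
          (EuclideanSpace.single j 1)) 2 volume) :
    Tendsto (fun R : ℝ => ⨆ x : Metric.sphere (0 : EuclideanSpace ℝ (Fin 2)) R, |w x|)
      atTop (nhds 0) := by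
  have h_fst : Tendsto (w ∘ euclideanPlaneEquiv) (comap Prod.fst (cocompact ℝ)) (𝓝 0) := by
    have := tendsto_comp_comap_fst_cocompact_of_memLp (L := euclideanPlaneEquiv) hw
      euclideanPlaneEquiv_measurePreserving hw2
    simp only [ContinuousLinearEquiv.coe_coe, euclideanPlaneEquiv_one_zero,
      euclideanPlaneEquiv_zero_one] at this
    exact this (hw1 0) (hw1 1) (hw11 0 1)
  have h_snd : Tendsto (w ∘ euclideanPlaneEquiv ∘ Prod.swap) (comap Prod.fst (cocompact ℝ))
      (𝓝 0) := by
    have := tendsto_comp_comap_fst_cocompact_of_memLp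
      (L := (ContinuousLinearEquiv.prodComm ℝ ℝ ℝ).trans euclideanPlaneEquiv) hw
      (euclideanPlaneEquiv_measurePreserving.comp Measure.measurePreserving_swap) hw2
    simp only [ContinuousLinearEquiv.coe_coe, ContinuousLinearEquiv.trans_apply,
      ContinuousLinearEquiv.prodComm_apply, Prod.swap_prod_mk, euclideanPlaneEquiv_one_zero,
      euclideanPlaneEquiv_zero_one] at this
    exact this (hw1 1) (hw1 0) (hw11 1 0)
  have h_plane : Tendsto w (cocompact _) (𝓝 0) := by
    rw [← euclideanPlaneEquiv.toHomeomorph.map_cocompact, tendsto_map'_iff]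
    exact tendsto_cocompact_prod_of_comap_fst h_fst h_snd
  exact tendsto_iSup_sphere_of_tendsto_cobounded (h_plane.mono_left Metric.cobounded_le_cocompact)
end

section
/- Let R > 0 and σ > 0. Let h : ℝ² → ℝ be continuous on the closed exterior region {x ∈ ℝ² : |x| ≥ R}, twice continuously differentiable on the open region {|x| > R}, and suppose: (i) Δh(x) ≥ σ²·h(x) for all |x| > R; (ii) h(x) ≤ 0 for all |x| = R; and (iii) h(x) → 0 as |x| → ∞. Then h(x) ≤ 0 for all x with |x| ≥ R. -/
/-!
If `h` were positive somewhere, then, since `h → 0` at infinity, it would attain a positive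
maximum on the closed exterior region; as `h ≤ 0` on the circle, this maximum lies in the open
region, where `Δh ≤ 0` at a maximum, contradicting `Δh ≥ σ²h > 0`.
-/

open Filter Topology

/-- The Laplacian `Δf = ∂₁²f + ∂₂²f` of a function on `ℝ²`, expressed through
iterated directional derivatives along the standard basis. -/
noncomputable def lap (f : EuclideanSpace ℝ (Fin 2) → ℝ) (x : EuclideanSpace ℝ (Fin 2)) : ℝ :=
  ∑ i : Fin 2,
    fderiv ℝ (fun y => fderiv ℝ f y (EuclideanSpace.single i 1)) x (EuclideanSpace.single i 1)

theorem IsLocalMax.deriv_deriv_nonpos {f : ℝ → ℝ} {a : ℝ} (hmax : IsLocalMax f a)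
    (hc : ContinuousAt f a) : deriv (deriv f) a ≤ 0 := by
  by_contra! hpos
  -- By the second derivative test `a` is also a local minimum, so `f` is constant near `a`.
  have hmin : IsLocalMin f a := isLocalMin_of_deriv_deriv_pos hpos hmax.deriv_eq_zero hc
  have hconst : f =ᶠ[𝓝 a] fun _ => f a :=
    (hmin.and hmax).mono fun _ hx => le_antisymm hx.2 hx.1
  have hderiv : deriv f =ᶠ[𝓝 a] fun _ => 0 :=
    hconst.eventuallyEq_nhds.mono fun _ hx => by rw [hx.deriv_eq, deriv_const]
  rw [hderiv.deriv_eq, deriv_const] at hpos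
  exact hpos.false

theorem IsLocalMax.fderiv_fderiv_apply_nonpos {E : Type*} [NormedAddCommGroup E]
    [NormedSpace ℝ E] {f : E → ℝ} {z v : E} (hmax : IsLocalMax f z)
    (hf : ∀ᶠ y in 𝓝 z, DifferentiableAt ℝ f y)
    (hdf : DifferentiableAt ℝ (fun y => fderiv ℝ f y v) z) :
    fderiv ℝ (fun y => fderiv ℝ f y v) z v ≤ 0 := by
  obtain ⟨line, hline, rfl⟩ : ∃ line : ℝ → E, (∀ t, HasDerivAt line v t) ∧ line 0 = z :=
    ⟨fun t => z + t • v, fun t => by simpa using ((hasDerivAt_id t).smul_const v).const_add z,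
      by simp⟩
  have hderiv : deriv (f ∘ line) =ᶠ[𝓝 0] (fun y => fderiv ℝ f y v) ∘ line :=
    ((hline 0).continuousAt.eventually hf).mono fun t ht =>
      (ht.hasFDerivAt.comp_hasDerivAt t (hline t)).deriv
  rw [← (hdf.hasFDerivAt.comp_hasDerivAt 0 (hline 0)).deriv, ← hderiv.deriv_eq]
  exact (hmax.comp_continuous (hline 0).continuousAt).deriv_deriv_nonpos
    (hf.self_of_nhds.continuousAt.comp (hline 0).continuousAt)

theorem IsLocalMax.lap_nonpos {f : EuclideanSpace ℝ (Fin 2) → ℝ} {z : EuclideanSpace ℝ (Fin 2)}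
    (hmax : IsLocalMax f z) (hf : ContDiffAt ℝ 2 f z) : lap f z ≤ 0 := by
  have hdiff : ∀ᶠ y in 𝓝 z, DifferentiableAt ℝ f y :=
    (hf.eventually (by simp)).mono fun _ hy => hy.differentiableAt (by norm_num)
  have hdf : DifferentiableAt ℝ (fderiv ℝ f) z :=
    (hf.fderiv_right (m := 1) (by norm_num)).differentiableAt (by norm_num)
  exact Finset.sum_nonpos fun _ _ =>
    hmax.fderiv_fderiv_apply_nonpos hdiff (hdf.clm_apply (differentiableAt_const _))

theorem exterior_maximum_principle_general (R σ : ℝ) (hσ : 0 < σ)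
    (h : EuclideanSpace ℝ (Fin 2) → ℝ)
    (hcont : ContinuousOn h {x | R ≤ ‖x‖})
    (hC2 : ContDiffOn ℝ 2 h {x | R < ‖x‖})
    (hsub : ∀ x, R < ‖x‖ → σ ^ 2 * h x ≤ lap h x)
    (hbdry : ∀ x, ‖x‖ = R → h x ≤ 0)
    (hlim : Tendsto h (cocompact (EuclideanSpace ℝ (Fin 2))) (nhds 0)) :
    ∀ x, R ≤ ‖x‖ → h x ≤ 0 := by
  intro x₀ hx₀
  by_contra! hpos
  have hclosed : IsClosed {x : EuclideanSpace ℝ (Fin 2) | R ≤ ‖x‖} :=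
    isClosed_le continuous_const continuous_norm
  obtain ⟨z, hzR, hzmax⟩ := hcont.exists_isMaxOn' hclosed hx₀ <|
    (hlim.eventually (eventually_le_nhds hpos)).filter_mono inf_le_left
  have hz_pos : 0 < h z := hpos.trans_le (hzmax hx₀)
  have hz_ext : R < ‖z‖ := hzR.lt_of_ne fun hz => (hbdry z hz.symm).not_gt hz_pos
  have hz_nhds : {x : EuclideanSpace ℝ (Fin 2) | R < ‖x‖} ∈ 𝓝 z :=
    (isOpen_lt continuous_const continuous_norm).mem_nhds hz_ext
  have hlocmax : IsLocalMax h z :=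
    hzmax.isLocalMax (mem_of_superset hz_nhds fun x (hx : R < ‖x‖) => hx.le)
  have hlap := (hsub z hz_ext).trans (hlocmax.lap_nonpos (hC2.contDiffAt hz_nhds))
  exact (mul_pos (pow_pos hσ 2) hz_pos).not_ge hlap

/-- maximum-principle comparison on an exterior region. Let `R, σ > 0`
and let `h` be continuous on `{|x| ≥ R}`, `C²` on `{|x| > R}`, with `Δh ≥ σ²h` there,
`h ≤ 0` on `{|x| = R}`, and `h(x) → 0` as `|x| → ∞`. Then `h ≤ 0` on `{|x| ≥ R}`. -/
theorem exterior_maximum_principle (R σ : ℝ) (hR : 0 < R) (hσ : 0 < σ)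
    (h : EuclideanSpace ℝ (Fin 2) → ℝ)
    (hcont : ContinuousOn h {x | R ≤ ‖x‖})
    (hC2 : ContDiffOn ℝ 2 h {x | R < ‖x‖})
    (hsub : ∀ x, R < ‖x‖ → σ ^ 2 * h x ≤ lap h x)
    (hbdry : ∀ x, ‖x‖ = R → h x ≤ 0)
    (hlim : Tendsto h (cocompact (EuclideanSpace ℝ (Fin 2))) (nhds 0)) :
    ∀ x, R ≤ ‖x‖ → h x ≤ 0 :=
  exterior_maximum_principle_general R σ hσ h hcont hC2 hsub hbdry hlim
end

section
/- Let p > 0 and q > 0 with p ≠ q, let K = (1/p)·[[p+q, p−q],[p−q, p+q]] with entries k_ij, and set λ₀ = 4·min{2, 2q/p}. Let R₀ > 0 and let v₁, v₂ : ℝ² → ℝ be C³ on {|x| > R₀}, with v₁, v₂, |∇v₁| and |∇v₂| all tending to 0 as |x| → ∞, satisfying for all |x| > R₀ and i = 1, 2: Δv_i = 2k_{i1}v₁ + 2k_{i2}v₂ + 2k_{i1}(e^{v₁} − v₁ − 1) + 2k_{i2}(e^{v₂} − v₂ − 1). Then for every δ ∈ (0,1) there exist a constant C_δ > 0 and a radius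 R ≥ R₀ such that |∇v₁(x)|² + |∇v₂(x)|² ≤ C_δ·e^{−(1−δ)·√λ₀·|x|} for all |x| ≥ R. -/
open Filter

/-! Write `W = |∇v₁|² + |∇v₂|²`. Differentiating the system gives
`Δ(∂ᵢv) = 2K·diag(e^{v₁}, e^{v₂})·∂ᵢv`, so Bochner's identity `Δ|∇f|² = 2|∇²f|² + 2∇f·∇Δf`
yields `ΔW ≥ 4∑ᵢ ⟨∂ᵢv, K·diag(e^{v})·∂ᵢv⟩`. Since `e^{v} → 1` and `4·λ_min(K) = λ₀`, this gives
`ΔW ≥ μW` near infinity for every `μ < λ₀`. For `α² < μ` the barrier `Ce^{-α|x|}` satisfies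
`Δ(Ce^{-α|x|}) = C(α² − α/|x|)e^{-α|x|} ≤ α²Ce^{-α|x|}`, so `W − Ce^{-α|x|}` has no positive
interior maximum; it tends to `0` at infinity and is nonpositive on a large circle once `C` is
large, hence it is nonpositive outside that circle. -/

open Real Topology

local notation "E2" => EuclideanSpace ℝ (Fin 2)

theorem ContDiffAt.eventually_differentiableAt {E F : Type*} [NormedAddCommGroup E]
    [NormedSpace ℝ E] [NormedAddCommGroup F] [NormedSpace ℝ F] {f : E → F} {x : E}
    (hf : ContDiffAt ℝ 2 f x) : ∀ᶠ y in 𝓝 x, DifferentiableAt ℝ f y :=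
  (hf.eventually (by simp)).mono fun _ hy => hy.differentiableAt (by norm_num)

section PartialDeriv

variable {ι : Type*} [DecidableEq ι]

noncomputable def partialDeriv (i : ι) (f : EuclideanSpace ℝ ι → ℝ) (x : EuclideanSpace ℝ ι) : ℝ :=
  fderiv ℝ f x (EuclideanSpace.single i 1)

theorem partialDeriv_congr {f g : EuclideanSpace ℝ ι → ℝ} {x : EuclideanSpace ℝ ι}
    (h : f =ᶠ[𝓝 x] g) (i : ι) : partialDeriv i f x = partialDeriv i g x := by
  simp [partialDeriv, h.fderiv_eq]

variable [Fintype ι]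

theorem ContinuousLinearMap.norm_sq_eq_sum_apply_single (L : EuclideanSpace ℝ ι →L[ℝ] ℝ) :
    ‖L‖ ^ 2 = ∑ i, L (EuclideanSpace.single i 1) ^ 2 := by
  have hL : ∀ i, L (EuclideanSpace.single i 1) = (InnerProductSpace.toDual ℝ _).symm L i := by
    intro i
    rw [← InnerProductSpace.toDual_symm_apply, EuclideanSpace.inner_single_right]
    simp
  rw [← (InnerProductSpace.toDual ℝ _).symm.norm_map L, EuclideanSpace.norm_eq,
    sq_sqrt (by positivity)]
  simp [hL, sq_abs]

theorem norm_fderiv_sq_eq_sum_partialDeriv_sq (f : EuclideanSpace ℝ ι → ℝ)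
    (x : EuclideanSpace ℝ ι) :
    ‖fderiv ℝ f x‖ ^ 2 = ∑ i, partialDeriv i f x ^ 2 :=
  (fderiv ℝ f x).norm_sq_eq_sum_apply_single

variable {f g : EuclideanSpace ℝ ι → ℝ} {x : EuclideanSpace ℝ ι} {n : WithTop ℕ∞}

theorem ContDiffAt.partialDeriv (hf : ContDiffAt ℝ (n + 1) f x) (i : ι) :
    ContDiffAt ℝ n (_root_.partialDeriv i f) x :=
  (hf.fderiv_right le_rfl).clm_apply contDiffAt_const

theorem ContDiffAt.differentiableAt_partialDeriv (hf : ContDiffAt ℝ 2 f x) (i : ι) :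
    DifferentiableAt ℝ (_root_.partialDeriv i f) x :=
  (hf.partialDeriv (n := 1) i).differentiableAt one_ne_zero

theorem partialDeriv_add (hf : DifferentiableAt ℝ f x) (hg : DifferentiableAt ℝ g x) (i : ι) :
    partialDeriv i (fun y => f y + g y) x = partialDeriv i f x + partialDeriv i g x := by
  simp [partialDeriv, fderiv_fun_add hf hg]

theorem partialDeriv_sub (hf : DifferentiableAt ℝ f x) (hg : DifferentiableAt ℝ g x) (i : ι) :
    partialDeriv i (fun y => f y - g y) x = partialDeriv i f x - partialDeriv i g x := by
  simp [partialDeriv, fderiv_fun_sub hf hg]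

theorem partialDeriv_mul (hf : DifferentiableAt ℝ f x) (hg : DifferentiableAt ℝ g x) (i : ι) :
    partialDeriv i (fun y => f y * g y) x =
      f x * partialDeriv i g x + g x * partialDeriv i f x := by
  simp [partialDeriv, fderiv_fun_mul hf hg]

theorem partialDeriv_sum {κ : Type*} {s : Finset κ} {F : κ → EuclideanSpace ℝ ι → ℝ}
    (hF : ∀ j ∈ s, DifferentiableAt ℝ (F j) x) (i : ι) :
    partialDeriv i (fun y => ∑ j ∈ s, F j y) x = ∑ j ∈ s, partialDeriv i (F j) x := by
  simp [partialDeriv, fderiv_fun_sum hF]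

theorem partialDeriv_const_mul (hf : DifferentiableAt ℝ f x) (c : ℝ) (i : ι) :
    partialDeriv i (fun y => c * f y) x = c * partialDeriv i f x := by
  simp [partialDeriv, fderiv_const_mul hf]

theorem partialDeriv_comm (hf : ContDiffAt ℝ 2 f x) (i j : ι) :
    partialDeriv i (partialDeriv j f) x = partialDeriv j (partialDeriv i f) x := by
  have hd : DifferentiableAt ℝ (fderiv ℝ f) x :=
    (hf.fderiv_right (m := 1) le_rfl).differentiableAt one_ne_zero
  have hsnd : ∀ a b, partialDeriv a (partialDeriv b f) x =
      fderiv ℝ (fderiv ℝ f) x (EuclideanSpace.single a 1) (EuclideanSpace.single b 1) := by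
    intro a b
    change fderiv ℝ (fun y => fderiv ℝ f y (EuclideanSpace.single b 1)) x _ = _
    rw [fderiv_clm_apply hd (differentiableAt_const _)]
    simp
  rw [hsnd, hsnd]
  exact hf.isSymmSndFDerivAt (by simp) _ _

end PartialDeriv

section Laplacian

variable {f g : E2 → ℝ} {x : E2}

theorem lap_eq_sum_partialDeriv (f : E2 → ℝ) (x : E2) :
    lap f x = ∑ i, partialDeriv i (partialDeriv i f) x := rfl

theorem lap_add (hf : ContDiffAt ℝ 2 f x) (hg : ContDiffAt ℝ 2 g x) :
    lap (fun y => f y + g y) x = lap f x + lap g x := by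
  simp only [lap_eq_sum_partialDeriv, ← Finset.sum_add_distrib]
  refine Finset.sum_congr rfl fun i _ => ?_
  have h : partialDeriv i (fun y => f y + g y) =ᶠ[𝓝 x]
      fun y => partialDeriv i f y + partialDeriv i g y := by
    filter_upwards [hf.eventually_differentiableAt, hg.eventually_differentiableAt] with y hfy hgy
    exact partialDeriv_add hfy hgy i
  rw [partialDeriv_congr h, partialDeriv_add
    (hf.differentiableAt_partialDeriv i) (hg.differentiableAt_partialDeriv i)]

theorem lap_sub (hf : ContDiffAt ℝ 2 f x) (hg : ContDiffAt ℝ 2 g x) :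
    lap (fun y => f y - g y) x = lap f x - lap g x := by
  simp only [lap_eq_sum_partialDeriv, ← Finset.sum_sub_distrib]
  refine Finset.sum_congr rfl fun i _ => ?_
  have h : partialDeriv i (fun y => f y - g y) =ᶠ[𝓝 x]
      fun y => partialDeriv i f y - partialDeriv i g y := by
    filter_upwards [hf.eventually_differentiableAt, hg.eventually_differentiableAt] with y hfy hgy
    exact partialDeriv_sub hfy hgy i
  rw [partialDeriv_congr h, partialDeriv_sub
    (hf.differentiableAt_partialDeriv i) (hg.differentiableAt_partialDeriv i)]

theorem lap_sq (hf : ContDiffAt ℝ 2 f x) :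
    lap (fun y => f y ^ 2) x = 2 * ∑ i, partialDeriv i f x ^ 2 + 2 * f x * lap f x := by
  simp only [lap_eq_sum_partialDeriv, Finset.mul_sum, ← Finset.sum_add_distrib]
  refine Finset.sum_congr rfl fun i _ => ?_
  have h : partialDeriv i (fun y => f y ^ 2) =ᶠ[𝓝 x] fun y => 2 * f y * partialDeriv i f y := by
    filter_upwards [hf.eventually_differentiableAt] with y hy
    simp only [sq, partialDeriv_mul hy hy]
    ring
  have hf' := hf.differentiableAt two_ne_zero
  rw [partialDeriv_congr h, partialDeriv_mul (hf'.const_mul 2)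
    (hf.differentiableAt_partialDeriv i), partialDeriv_const_mul hf']
  ring

theorem lap_partialDeriv (hf : ContDiffAt ℝ 3 f x) (i : Fin 2) :
    lap (partialDeriv i f) x = partialDeriv i (lap f) x := by
  have hf2 : ∀ᶠ y in 𝓝 x, ContDiffAt ℝ 2 f y :=
    (hf.eventually (by simp)).mono fun _ hy => hy.of_le (by norm_num)
  have hcomm : ∀ j, partialDeriv j (partialDeriv j (partialDeriv i f)) x =
      partialDeriv i (partialDeriv j (partialDeriv j f)) x := fun j => by
    rw [partialDeriv_congr (hf2.mono fun y hy => partialDeriv_comm hy j i),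
      partialDeriv_comm (hf.partialDeriv j) j i]
  have hlap : lap f = fun y => ∑ j, partialDeriv j (partialDeriv j f) y := rfl
  rw [lap_eq_sum_partialDeriv, hlap, partialDeriv_sum fun j _ =>
    (hf.partialDeriv (n := 2) j).differentiableAt_partialDeriv j]
  exact Finset.sum_congr rfl fun j _ => hcomm j

theorem lap_norm_fderiv_sq (hf : ContDiffAt ℝ 3 f x) :
    lap (fun y => ‖fderiv ℝ f y‖ ^ 2) x =
      2 * ∑ i, ∑ j, partialDeriv j (partialDeriv i f) x ^ 2 +
        2 * ∑ i, partialDeriv i f x * partialDeriv i (lap f) x := by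
  have hsq : (fun y => ‖fderiv ℝ f y‖ ^ 2) =
      fun y => partialDeriv 0 f y ^ 2 + partialDeriv 1 f y ^ 2 := by
    funext y
    rw [norm_fderiv_sq_eq_sum_partialDeriv_sq, Fin.sum_univ_two]
  have hC2 : ∀ i, ContDiffAt ℝ 2 (partialDeriv i f) x := fun i => hf.partialDeriv i
  rw [hsq, lap_add ((hC2 0).pow 2) ((hC2 1).pow 2), lap_sq (hC2 0), lap_sq (hC2 1),
    lap_partialDeriv hf, lap_partialDeriv hf]
  simp only [Fin.sum_univ_two]
  ring

theorem contDiffAt_norm_fderiv_sq {f : E2 → ℝ} {x : E2} (hf : ContDiffAt ℝ 3 f x) :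
    ContDiffAt ℝ 2 (fun y => ‖fderiv ℝ f y‖ ^ 2) x := by
  simp only [norm_fderiv_sq_eq_sum_partialDeriv_sq]
  exact ContDiffAt.sum fun i _ => (hf.partialDeriv i).pow 2

end Laplacian

theorem deriv_deriv_nonpos_of_isLocalMax {g : ℝ → ℝ} {t : ℝ} (hmax : IsLocalMax g t)
    (hc : ContinuousAt g t) : deriv (deriv g) t ≤ 0 := by
  by_contra! hpos
  have hmin := isLocalMin_of_deriv_deriv_pos hpos hmax.deriv_eq_zero hc
  have hconst : g =ᶠ[𝓝 t] fun _ => g t :=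
    (hmax.and hmin).mono fun _ hs => le_antisymm hs.1 hs.2
  rw [hconst.deriv.deriv_eq] at hpos
  simp at hpos

theorem hasDerivAt_comp_add_smul {E : Type*} [NormedAddCommGroup E] [NormedSpace ℝ E]
    {φ : E → ℝ} {x v : E} {t : ℝ} (hφ : DifferentiableAt ℝ φ (x + t • v)) :
    HasDerivAt (fun s : ℝ => φ (x + s • v)) (fderiv ℝ φ (x + t • v) v) t :=
  hφ.hasFDerivAt.comp_hasDerivAt t (by simpa using ((hasDerivAt_id t).smul_const v).const_add x)

theorem lap_nonpos_of_isLocalMax {f : E2 → ℝ} {x : E2} (hf : ContDiffAt ℝ 2 f x)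
    (hmax : IsLocalMax f x) : lap f x ≤ 0 := by
  rw [lap_eq_sum_partialDeriv]
  refine Finset.sum_nonpos fun i _ => ?_
  set e : E2 := EuclideanSpace.single i 1
  have hx : x + (0 : ℝ) • e = x := by simp
  have hline : ContinuousAt (fun t : ℝ => x + t • e) 0 := by fun_prop
  have hderiv : deriv (fun t : ℝ => f (x + t • e)) =ᶠ[𝓝 0]
      fun t => partialDeriv i f (x + t • e) :=
    ((hx ▸ hline.tendsto).eventually hf.eventually_differentiableAt).mono fun t ht =>
      (hasDerivAt_comp_add_smul ht).deriv
  have hsecond : deriv (deriv fun t : ℝ => f (x + t • e)) 0 =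
      partialDeriv i (partialDeriv i f) x := by
    rw [hderiv.deriv_eq]
    exact (hasDerivAt_comp_add_smul (t := 0) (v := e)
      (by simpa using hf.differentiableAt_partialDeriv i)).deriv.trans (by simp [e, partialDeriv])
  rw [← hsecond]
  rw [← hx] at hmax hf
  exact deriv_deriv_nonpos_of_isLocalMax
    (hmax.comp_continuous (g := fun t : ℝ => x + t • e) hline)
    (hf.continuousAt.comp_of_eq hline rfl)

theorem hasFDerivAt_norm {F : Type*} [NormedAddCommGroup F] [InnerProductSpace ℝ F] {x : F}
    (hx : x ≠ 0) : HasFDerivAt (‖·‖) (‖x‖⁻¹ • innerSL ℝ x) x := by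
  have h := (hasDerivAt_sqrt (by positivity : ‖x‖ ^ 2 ≠ 0)).comp_hasFDerivAt x
    (hasStrictFDerivAt_norm_sq x).hasFDerivAt
  refine (h.congr_fderiv ?_).congr_of_eventuallyEq
    (Eventually.of_forall fun y => (sqrt_sq (norm_nonneg y)).symm)
  ext y
  simp [sqrt_sq (norm_nonneg x)]
  field_simp

theorem partialDeriv_comp_norm {ι : Type*} [Fintype ι] [DecidableEq ι] {φ : ℝ → ℝ} {d : ℝ}
    {y : EuclideanSpace ℝ ι} (hy : y ≠ 0) (hφ : HasDerivAt φ d ‖y‖) (j : ι) :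
    partialDeriv j (fun z => φ ‖z‖) y = d * y j / ‖y‖ := by
  change fderiv ℝ (φ ∘ (‖·‖)) y _ = _
  rw [(hφ.comp_hasFDerivAt y (hasFDerivAt_norm hy)).fderiv]
  simp [EuclideanSpace.inner_single_right]
  ring

theorem lap_comp_norm {φ φ' : ℝ → ℝ} {φ'' : ℝ} {x : E2} (hx : x ≠ 0)
    (hφ : ∀ᶠ r in 𝓝 ‖x‖, HasDerivAt φ (φ' r) r) (hφ' : HasDerivAt φ' φ'' ‖x‖) :
    lap (fun y => φ ‖y‖) x = φ'' + φ' ‖x‖ / ‖x‖ := by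
  have hr : 0 < ‖x‖ := norm_pos_iff.2 hx
  have hψ : HasDerivAt (fun r => φ' r / r) ((φ'' * ‖x‖ - φ' ‖x‖ * 1) / ‖x‖ ^ 2) ‖x‖ :=
    hφ'.fun_div (hasDerivAt_id' _) hr.ne'
  have hfirst : ∀ j, partialDeriv j (fun y => φ ‖y‖) =ᶠ[𝓝 x] fun y => φ' ‖y‖ / ‖y‖ * y j := by
    intro j
    filter_upwards [continuous_norm.continuousAt.eventually hφ, eventually_ne_nhds hx]
      with y hy hy0
    rw [partialDeriv_comp_norm hy0 hy]
    ring
  have hψd : DifferentiableAt ℝ (fun y : E2 => φ' ‖y‖ / ‖y‖) x :=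
    hψ.differentiableAt.comp x (hasFDerivAt_norm hx).differentiableAt
  have hproj : ∀ j : Fin 2,
      HasFDerivAt (fun y : E2 => y j) (EuclideanSpace.proj j : E2 →L[ℝ] ℝ) x :=
    fun j => (EuclideanSpace.proj j : E2 →L[ℝ] ℝ).hasFDerivAt
  have hsecond : ∀ j, partialDeriv j (partialDeriv j (fun y => φ ‖y‖)) x =
      φ' ‖x‖ / ‖x‖ + (φ'' * ‖x‖ - φ' ‖x‖) / ‖x‖ ^ 3 * x j ^ 2 := fun j => by
    rw [partialDeriv_congr (hfirst j), partialDeriv_mul hψd (hproj j).differentiableAt,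
      partialDeriv_comp_norm hx hψ, partialDeriv, (hproj j).fderiv]
    simp
    field_simp
  have hnorm : ‖x‖ ^ 2 = x 0 ^ 2 + x 1 ^ 2 := by
    simp [EuclideanSpace.real_norm_sq_eq, Fin.sum_univ_two]
  rw [lap_eq_sum_partialDeriv, Fin.sum_univ_two, hsecond, hsecond]
  field_simp
  linear_combination (φ' ‖x‖ - ‖x‖ * φ'') * hnorm

theorem lap_mul_exp_neg_norm (C α : ℝ) {x : E2} (hx : x ≠ 0) :
    lap (fun y => C * exp (-α * ‖y‖)) x = C * (α ^ 2 - α / ‖x‖) * exp (-α * ‖x‖) := by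
  have hφ : ∀ r : ℝ, HasDerivAt (fun r => C * exp (-α * r)) (-α * (C * exp (-α * r))) r :=
    fun r => (((hasDerivAt_id' r).const_mul (-α)).exp.const_mul C).congr_deriv (by ring)
  rw [lap_comp_norm hx (Eventually.of_forall hφ) ((hφ ‖x‖).const_mul (-α))]
  field_simp
  ring

theorem contDiffAt_mul_exp_neg_norm (C α : ℝ) {x : E2} (hx : x ≠ 0) :
    ContDiffAt ℝ 2 (fun y : E2 => C * exp (-α * ‖y‖)) x := by
  have := contDiffAt_norm ℝ hx (n := 2)
  fun_prop

theorem exterior_nonpos_of_isLocalMax_nonpos {E : Type*} [NormedAddCommGroup E] {h : E → ℝ}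
    {R : ℝ} (hcont : ContinuousOn h {x | R ≤ ‖x‖})
    (hlim : Tendsto h (cocompact E) (𝓝 0)) (hbdry : ∀ x, ‖x‖ = R → h x ≤ 0)
    (hmax : ∀ x, R < ‖x‖ → IsLocalMax h x → h x ≤ 0) :
    ∀ x, R ≤ ‖x‖ → h x ≤ 0 := by
  intro x₀ hx₀
  by_contra! hpos
  obtain ⟨z, hz, hzmax⟩ := hcont.exists_isMaxOn' (isClosed_le continuous_const continuous_norm)
    hx₀ ((hlim.eventually (eventually_le_nhds hpos)).filter_mono inf_le_left)
  have hz0 : 0 < h z := hpos.trans_le (hzmax hx₀)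
  rcases (show R ≤ ‖z‖ from hz).eq_or_lt with hzR | hzR
  · exact (hbdry z hzR.symm).not_gt hz0
  · have hnhds : {x : E | R ≤ ‖x‖} ∈ 𝓝 z :=
      mem_of_superset ((isOpen_lt continuous_const continuous_norm).mem_nhds hzR)
        (Set.ofPred_subset_ofPred.2 fun _ => le_of_lt)
    exact (hmax z hzR (hzmax.isLocalMax hnhds)).not_gt hz0

section Exterior

variable {E : Type*} [NormedAddCommGroup E] [ProperSpace E]

theorem exists_forall_le_norm_of_eventually_cocompact {P : E → Prop}
    (h : ∀ᶠ x in cocompact E, P x) : ∃ r, ∀ x, r ≤ ‖x‖ → P x := by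
  rw [← Metric.cobounded_eq_cocompact, ← comap_norm_atTop, eventually_comap,
    eventually_atTop] at h
  obtain ⟨r, hr⟩ := h
  exact ⟨r, fun x hx => hr _ hx x rfl⟩

theorem exists_pos_forall_sphere_le_mul_exp {W : E → ℝ} {R : ℝ}
    (hW : ContinuousOn W (Metric.sphere 0 R)) (α : ℝ) :
    ∃ C > 0, ∀ x, ‖x‖ = R → W x ≤ C * exp (-α * R) := by
  obtain ⟨M, hM⟩ := (isCompact_sphere 0 R).exists_bound_of_continuousOn hW
  refine ⟨(|M| + 1) * exp (α * R), by positivity, fun x hx => ?_⟩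
  rw [mul_assoc, ← exp_add, show α * R + -α * R = 0 by ring, exp_zero, mul_one]
  have := hM x (by simpa using hx)
  linarith [le_abs_self (W x), le_abs_self M, Real.norm_eq_abs (W x)]

end Exterior

theorem le_mul_exp_neg_norm_of_mul_le_lap {W : E2 → ℝ} {μ α C R : ℝ} (hR : 0 ≤ R) (hα : 0 < α)
    (hαμ : α ^ 2 < μ) (hC : 0 ≤ C) (hcont : ContinuousOn W {x | R ≤ ‖x‖})
    (hW : ∀ x, R < ‖x‖ → ContDiffAt ℝ 2 W x) (hlim : Tendsto W (cocompact E2) (𝓝 0))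
    (hlap : ∀ x, R < ‖x‖ → μ * W x ≤ lap W x)
    (hbdry : ∀ x, ‖x‖ = R → W x ≤ C * exp (-α * R)) :
    ∀ x, R ≤ ‖x‖ → W x ≤ C * exp (-α * ‖x‖) := by
  set g : E2 → ℝ := fun y => C * exp (-α * ‖y‖)
  have hg0 : Tendsto g (cocompact E2) (𝓝 0) := by
    have hexp : Tendsto (fun r : ℝ => C * exp (-α * r)) atTop (𝓝 0) := by
      simpa using ((tendsto_exp_atBot.comp
        (tendsto_id.const_mul_atTop_of_neg (neg_neg_of_pos hα))).const_mul C)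
    exact hexp.comp tendsto_norm_cocompact_atTop
  suffices h : ∀ x, R ≤ ‖x‖ → W x - g x ≤ 0 from fun x hx => sub_nonpos.1 (h x hx)
  refine exterior_nonpos_of_isLocalMax_nonpos (hcont.sub (by fun_prop : Continuous g).continuousOn)
    (by simpa using hlim.sub hg0) (fun x hx => by simpa [g, hx] using hbdry x hx) ?_
  intro z hz hzmax
  by_contra! hpos
  have hz0 : z ≠ 0 := norm_pos_iff.1 (hR.trans_lt hz)
  have hgz := contDiffAt_mul_exp_neg_norm C α hz0
  have hlap_le := lap_nonpos_of_isLocalMax ((hW z hz).sub hgz) hzmax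
  rw [lap_sub (hW z hz) hgz, lap_mul_exp_neg_norm C α hz0] at hlap_le
  have hμ : 0 < μ := (sq_nonneg α).trans_lt hαμ
  have hslack : 0 ≤ C * exp (-α * ‖z‖) * (μ - α ^ 2 + α / ‖z‖) := by
    have : 0 ≤ α / ‖z‖ := by positivity
    have : 0 ≤ μ - α ^ 2 + α / ‖z‖ := by linarith
    positivity
  nlinarith [hlap z hz, mul_pos hμ hpos]

theorem min_mul_sq_add_sq_le (a A B : ℝ) :
    2 * min 1 a * (A ^ 2 + B ^ 2) ≤ (A + B) ^ 2 + a * (A - B) ^ 2 := by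
  rcases le_total 1 a with h | h
  · rw [min_eq_left h]
    nlinarith [mul_nonneg (sub_nonneg.2 h) (sq_nonneg (A - B))]
  · rw [min_eq_right h]
    nlinarith [mul_nonneg (sub_nonneg.2 h) (sq_nonneg (A + B))]

/-- The right-hand side is `2⟨ξ, 2K·diag(d₁, d₂)·ξ⟩` for `ξ = (A, B)` and the coupling matrix
normalized to `K = [[1 + a, 1 - a], [1 - a, 1 + a]]`, whose eigenvalues are `2` and `2a`. -/
theorem coupling_form_lower_bound {a η d₁ d₂ : ℝ} (ha : 0 < a) (h₁ : |d₁ - 1| ≤ η)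
    (h₂ : |d₂ - 1| ≤ η) (A B : ℝ) :
    (8 * min 1 a - 8 * (1 + a) * η) * (A ^ 2 + B ^ 2) ≤
      2 * (A * (2 * (1 + a) * d₁ * A + 2 * (1 - a) * d₂ * B) +
        B * (2 * (1 - a) * d₁ * A + 2 * (1 + a) * d₂ * B)) := by
  have hη : 0 ≤ η := (abs_nonneg _).trans h₁
  obtain ⟨h₁l, -⟩ := abs_le.1 h₁
  obtain ⟨h₂l, -⟩ := abs_le.1 h₂
  have hdiag : 0 ≤ (1 + a) * ((d₁ - 1 + η) * A ^ 2 + (d₂ - 1 + η) * B ^ 2) := by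
    have := sq_nonneg A; have := sq_nonneg B
    have : 0 ≤ d₁ - 1 + η := by linarith
    have : 0 ≤ d₂ - 1 + η := by linarith
    positivity
  have hcross : |(1 - a) * (d₁ - 1 + (d₂ - 1)) * (A * B)| ≤ (1 + a) * η * (A ^ 2 + B ^ 2) := by
    rw [abs_mul, abs_mul]
    have h1a : |1 - a| ≤ 1 + a := abs_le.2 ⟨by linarith, by linarith⟩
    have hε : |d₁ - 1 + (d₂ - 1)| ≤ 2 * η := (abs_add_le _ _).trans (by linarith)
    have hAB : |A * B| ≤ (A ^ 2 + B ^ 2) / 2 := by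
      rw [abs_mul]
      nlinarith [sq_nonneg (|A| - |B|), sq_abs A, sq_abs B]
    calc |1 - a| * |d₁ - 1 + (d₂ - 1)| * |A * B| ≤ (1 + a) * (2 * η) * ((A ^ 2 + B ^ 2) / 2) := by
          gcongr
      _ = (1 + a) * η * (A ^ 2 + B ^ 2) := by ring
  linear_combination 4 * min_mul_sq_add_sq_le a A B + 4 * hdiag + 4 * (abs_le.1 hcross).1

theorem partialDeriv_exp_sub_one_comb {v₁ v₂ : E2 → ℝ} {x : E2} (hv₁ : DifferentiableAt ℝ v₁ x)
    (hv₂ : DifferentiableAt ℝ v₂ x) (c₁ c₂ : ℝ) (i : Fin 2) :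
    partialDeriv i (fun y => c₁ * (exp (v₁ y) - 1) + c₂ * (exp (v₂ y) - 1)) x =
      c₁ * exp (v₁ x) * partialDeriv i v₁ x + c₂ * exp (v₂ x) * partialDeriv i v₂ x := by
  have h := ((hv₁.hasFDerivAt.exp.sub_const 1).const_mul c₁).fun_add
    ((hv₂.hasFDerivAt.exp.sub_const 1).const_mul c₂)
  simp [partialDeriv, h.fderiv]
  ring

noncomputable def gradEnergy (v₁ v₂ : E2 → ℝ) (x : E2) : ℝ :=
  ‖fderiv ℝ v₁ x‖ ^ 2 + ‖fderiv ℝ v₂ x‖ ^ 2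

theorem mul_gradEnergy_le_lap_gradEnergy {a η : ℝ} (ha : 0 < a) {v₁ v₂ : E2 → ℝ} {x : E2}
    (hv₁ : ContDiffAt ℝ 3 v₁ x) (hv₂ : ContDiffAt ℝ 3 v₂ x)
    (hpde₁ : lap v₁ =ᶠ[𝓝 x]
      fun y => 2 * (1 + a) * (exp (v₁ y) - 1) + 2 * (1 - a) * (exp (v₂ y) - 1))
    (hpde₂ : lap v₂ =ᶠ[𝓝 x]
      fun y => 2 * (1 - a) * (exp (v₁ y) - 1) + 2 * (1 + a) * (exp (v₂ y) - 1))
    (h₁ : |exp (v₁ x) - 1| ≤ η) (h₂ : |exp (v₂ x) - 1| ≤ η) :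
    (8 * min 1 a - 8 * (1 + a) * η) * gradEnergy v₁ v₂ x ≤ lap (gradEnergy v₁ v₂) x := by
  have hd₁ := hv₁.differentiableAt (by norm_num)
  have hd₂ := hv₂.differentiableAt (by norm_num)
  have hhess : ∀ f : E2 → ℝ, 0 ≤ ∑ i, ∑ j, partialDeriv j (partialDeriv i f) x ^ 2 :=
    fun f => Finset.sum_nonneg fun i _ => Finset.sum_nonneg fun j _ => sq_nonneg _
  change _ ≤ lap (fun y => ‖fderiv ℝ v₁ y‖ ^ 2 + ‖fderiv ℝ v₂ y‖ ^ 2) x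
  rw [lap_add (contDiffAt_norm_fderiv_sq hv₁) (contDiffAt_norm_fderiv_sq hv₂),
    lap_norm_fderiv_sq hv₁, lap_norm_fderiv_sq hv₂, gradEnergy,
    norm_fderiv_sq_eq_sum_partialDeriv_sq, norm_fderiv_sq_eq_sum_partialDeriv_sq]
  simp only [partialDeriv_congr hpde₁, partialDeriv_congr hpde₂,
    partialDeriv_exp_sub_one_comb hd₁ hd₂, Fin.sum_univ_two] at hhess ⊢
  have := coupling_form_lower_bound ha h₁ h₂ (partialDeriv 0 v₁ x) (partialDeriv 0 v₂ x)
  have := coupling_form_lower_bound ha h₁ h₂ (partialDeriv 1 v₁ x) (partialDeriv 1 v₂ x)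
  linarith [hhess v₁, hhess v₂]

section System

variable {a R₀ : ℝ} {v₁ v₂ : E2 → ℝ}

theorem exists_forall_mul_gradEnergy_le_lap {μ : ℝ} (ha : 0 < a) (hμa : μ < 8 * min 1 a)
    (hreg₁ : ContDiffOn ℝ 3 v₁ {x | R₀ < ‖x‖}) (hreg₂ : ContDiffOn ℝ 3 v₂ {x | R₀ < ‖x‖})
    (hlim₁ : Tendsto v₁ (cocompact E2) (𝓝 0)) (hlim₂ : Tendsto v₂ (cocompact E2) (𝓝 0))
    (hpde : ∀ x, R₀ < ‖x‖ →
      lap v₁ x = 2 * (1 + a) * (exp (v₁ x) - 1) + 2 * (1 - a) * (exp (v₂ x) - 1) ∧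
      lap v₂ x = 2 * (1 - a) * (exp (v₁ x) - 1) + 2 * (1 + a) * (exp (v₂ x) - 1)) :
    ∃ R, R₀ < R ∧ 0 < R ∧
      ∀ x, R < ‖x‖ → μ * gradEnergy v₁ v₂ x ≤ lap (gradEnergy v₁ v₂) x := by
  set η := (8 * min 1 a - μ) / (8 * (1 + a))
  have hη : 0 < η := div_pos (by linarith) (by linarith)
  have hμ : 8 * min 1 a - 8 * (1 + a) * η = μ := by
    simp only [η]
    field_simp
    ring
  have hexp : ∀ v : E2 → ℝ, Tendsto v (cocompact E2) (𝓝 0) →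
      ∀ᶠ x in cocompact E2, |exp (v x) - 1| ≤ η := fun v hv => by
    simpa [Real.dist_eq] using
      ((continuous_exp.tendsto 0).comp hv).eventually (Metric.closedBall_mem_nhds _ hη)
  obtain ⟨r, hr⟩ :=
    exists_forall_le_norm_of_eventually_cocompact ((hexp v₁ hlim₁).and (hexp v₂ hlim₂))
  obtain ⟨R, hR⟩ := exists_gt (max r (max R₀ 0))
  simp only [max_lt_iff] at hR
  obtain ⟨hrR, hR₀R, hR0⟩ := hR
  refine ⟨R, hR₀R, hR0, fun x hx => ?_⟩
  have hU : {y : E2 | R₀ < ‖y‖} ∈ 𝓝 x :=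
    (isOpen_lt continuous_const continuous_norm).mem_nhds (hR₀R.trans hx)
  rw [← hμ]
  exact mul_gradEnergy_le_lap_gradEnergy ha (hreg₁.contDiffAt hU) (hreg₂.contDiffAt hU)
    (mem_of_superset hU fun y hy => (hpde y hy).1) (mem_of_superset hU fun y hy => (hpde y hy).2)
    (hr x (hrR.trans hx).le).1 (hr x (hrR.trans hx).le).2

theorem gradEnergy_le_mul_exp_neg_norm {α : ℝ} (ha : 0 < a) (hα : 0 < α)
    (hαa : α ^ 2 < 8 * min 1 a)
    (hreg₁ : ContDiffOn ℝ 3 v₁ {x | R₀ < ‖x‖}) (hreg₂ : ContDiffOn ℝ 3 v₂ {x | R₀ < ‖x‖})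
    (hlim₁ : Tendsto v₁ (cocompact E2) (𝓝 0)) (hlim₂ : Tendsto v₂ (cocompact E2) (𝓝 0))
    (hglim₁ : Tendsto (fun x => ‖fderiv ℝ v₁ x‖) (cocompact E2) (𝓝 0))
    (hglim₂ : Tendsto (fun x => ‖fderiv ℝ v₂ x‖) (cocompact E2) (𝓝 0))
    (hpde : ∀ x, R₀ < ‖x‖ →
      lap v₁ x = 2 * (1 + a) * (exp (v₁ x) - 1) + 2 * (1 - a) * (exp (v₂ x) - 1) ∧
      lap v₂ x = 2 * (1 - a) * (exp (v₁ x) - 1) + 2 * (1 + a) * (exp (v₂ x) - 1)) :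
    ∃ C > 0, ∃ R ≥ R₀, ∀ x, R ≤ ‖x‖ → gradEnergy v₁ v₂ x ≤ C * exp (-α * ‖x‖) := by
  obtain ⟨μ, hαμ, hμa⟩ := exists_between hαa
  obtain ⟨R, hR₀R, hR0, hsub⟩ :=
    exists_forall_mul_gradEnergy_le_lap ha hμa hreg₁ hreg₂ hlim₁ hlim₂ hpde
  have hW : ∀ x, R ≤ ‖x‖ → ContDiffAt ℝ 2 (gradEnergy v₁ v₂) x := fun x hx =>
    have hU : {y : E2 | R₀ < ‖y‖} ∈ 𝓝 x :=
      (isOpen_lt continuous_const continuous_norm).mem_nhds (hR₀R.trans_le hx)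
    (contDiffAt_norm_fderiv_sq (hreg₁.contDiffAt hU)).add
      (contDiffAt_norm_fderiv_sq (hreg₂.contDiffAt hU))
  have hcont : ContinuousOn (gradEnergy v₁ v₂) {x | R ≤ ‖x‖} := fun x hx =>
    (hW x hx).continuousAt.continuousWithinAt
  have hlim : Tendsto (gradEnergy v₁ v₂) (cocompact E2) (𝓝 0) := by
    convert (hglim₁.pow 2).add (hglim₂.pow 2) using 2 <;> simp [gradEnergy]
  obtain ⟨C, hC, hbdry⟩ := exists_pos_forall_sphere_le_mul_exp
    (hcont.mono fun x hx => (mem_sphere_zero_iff_norm.1 hx).ge) α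
  exact ⟨C, hC, R, hR₀R.le, le_mul_exp_neg_norm_of_mul_le_lap hR0.le hα hαμ hC.le hcont
    (fun x hx => hW x hx.le) hlim hsub hbdry⟩

end System

theorem gradient_exponential_decay_of_solutions_general
    (p q : ℝ) (hp : 0 < p) (hq : 0 < q)
    (k11 k12 k21 k22 lam₀ : ℝ)
    (h11 : k11 = (p + q) / p) (h12 : k12 = (p - q) / p)
    (h21 : k21 = (p - q) / p) (h22 : k22 = (p + q) / p)
    (hlam : lam₀ = 4 * min 2 (2 * q / p))
    (R₀ : ℝ)
    (v₁ v₂ : EuclideanSpace ℝ (Fin 2) → ℝ)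
    (hreg1 : ContDiffOn ℝ 3 v₁ {x | R₀ < ‖x‖})
    (hreg2 : ContDiffOn ℝ 3 v₂ {x | R₀ < ‖x‖})
    (hlim1 : Tendsto v₁ (cocompact (EuclideanSpace ℝ (Fin 2))) (nhds 0))
    (hlim2 : Tendsto v₂ (cocompact (EuclideanSpace ℝ (Fin 2))) (nhds 0))
    (hglim1 : Tendsto (fun x => ‖fderiv ℝ v₁ x‖)
      (cocompact (EuclideanSpace ℝ (Fin 2))) (nhds 0))
    (hglim2 : Tendsto (fun x => ‖fderiv ℝ v₂ x‖)
      (cocompact (EuclideanSpace ℝ (Fin 2))) (nhds 0))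
    (hpde : ∀ x, R₀ < ‖x‖ →
      lap v₁ x = 2 * k11 * v₁ x + 2 * k12 * v₂ x
          + 2 * k11 * (Real.exp (v₁ x) - v₁ x - 1)
          + 2 * k12 * (Real.exp (v₂ x) - v₂ x - 1) ∧
      lap v₂ x = 2 * k21 * v₁ x + 2 * k22 * v₂ x
          + 2 * k21 * (Real.exp (v₁ x) - v₁ x - 1)
          + 2 * k22 * (Real.exp (v₂ x) - v₂ x - 1)) :
    ∀ δ ∈ Set.Ioo (0 : ℝ) 1, ∃ C > (0 : ℝ), ∃ R ≥ R₀, ∀ x, R ≤ ‖x‖ →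
      ‖fderiv ℝ v₁ x‖ ^ 2 + ‖fderiv ℝ v₂ x‖ ^ 2
        ≤ C * Real.exp (-(1 - δ) * Real.sqrt lam₀ * ‖x‖) := by
  rintro δ ⟨hδ₀, hδ₁⟩
  set a := q / p
  have ha : 0 < a := div_pos hq hp
  have hlam' : lam₀ = 8 * min 1 a := by
    have h2 : min 2 (2 * a) = 2 * min 1 a := by
      rw [mul_min_of_nonneg _ _ zero_le_two, mul_one]
    rw [hlam, show 2 * q / p = 2 * a by ring, h2]
    ring
  have hlam₀ : 0 < lam₀ := hlam' ▸ mul_pos (by norm_num) (lt_min one_pos ha)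
  have hα : 0 < (1 - δ) * √lam₀ := mul_pos (by linarith) (sqrt_pos.2 hlam₀)
  have hαlam : ((1 - δ) * √lam₀) ^ 2 < 8 * min 1 a := by
    have h1δ : (1 - δ) ^ 2 < 1 := by nlinarith
    rw [mul_pow, sq_sqrt hlam₀.le, ← hlam']
    nlinarith
  have hpde' : ∀ x, R₀ < ‖x‖ →
      lap v₁ x = 2 * (1 + a) * (exp (v₁ x) - 1) + 2 * (1 - a) * (exp (v₂ x) - 1) ∧
      lap v₂ x = 2 * (1 - a) * (exp (v₁ x) - 1) + 2 * (1 + a) * (exp (v₂ x) - 1) := by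
    intro x hx
    rw [(hpde x hx).1, (hpde x hx).2, h11, h12, h21, h22]
    constructor <;> (simp only [a]; field_simp; ring)
  obtain ⟨C, hC, R, hR, hdecay⟩ := gradEnergy_le_mul_exp_neg_norm ha hα hαlam hreg1 hreg2
    hlim1 hlim2 hglim1 hglim2 hpde'
  exact ⟨C, hC, R, hR, fun x hx => by simpa only [gradEnergy, neg_mul] using hdecay x hx⟩

/-- gradient exponential decay estimate (2.47). Let `p, q > 0`,
`p ≠ q`, `K` the coupling matrix, `λ₀ = 4·min{2, 2q/p}`. If `v₁, v₂` are `C³` outside the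
disk of radius `R₀`, with `v₁, v₂, |∇v₁|, |∇v₂| → 0` at infinity, and solve
`Δvᵢ = 2k_{i1}v₁ + 2k_{i2}v₂ + 2k_{i1}(e^{v₁}−v₁−1) + 2k_{i2}(e^{v₂}−v₂−1)` there, then
for every `δ ∈ (0,1)` there are `C_δ > 0` and `R ≥ R₀` with
`|∇v₁|² + |∇v₂|² ≤ C_δ·e^{−(1−δ)√λ₀|x|}` for `|x| ≥ R`. -/
theorem gradient_exponential_decay_of_solutions
    (p q : ℝ) (hp : 0 < p) (hq : 0 < q) (hpq : p ≠ q)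
    (k11 k12 k21 k22 lam₀ : ℝ)
    (h11 : k11 = (p + q) / p) (h12 : k12 = (p - q) / p)
    (h21 : k21 = (p - q) / p) (h22 : k22 = (p + q) / p)
    (hlam : lam₀ = 4 * min 2 (2 * q / p))
    (R₀ : ℝ) (hR₀ : 0 < R₀)
    (v₁ v₂ : EuclideanSpace ℝ (Fin 2) → ℝ)
    (hreg1 : ContDiffOn ℝ 3 v₁ {x | R₀ < ‖x‖})
    (hreg2 : ContDiffOn ℝ 3 v₂ {x | R₀ < ‖x‖})
    (hlim1 : Tendsto v₁ (cocompact (EuclideanSpace ℝ (Fin 2))) (nhds 0))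
    (hlim2 : Tendsto v₂ (cocompact (EuclideanSpace ℝ (Fin 2))) (nhds 0))
    (hglim1 : Tendsto (fun x => ‖fderiv ℝ v₁ x‖)
      (cocompact (EuclideanSpace ℝ (Fin 2))) (nhds 0))
    (hglim2 : Tendsto (fun x => ‖fderiv ℝ v₂ x‖)
      (cocompact (EuclideanSpace ℝ (Fin 2))) (nhds 0))
    (hpde : ∀ x, R₀ < ‖x‖ →
      lap v₁ x = 2 * k11 * v₁ x + 2 * k12 * v₂ x
          + 2 * k11 * (Real.exp (v₁ x) - v₁ x - 1)
          + 2 * k12 * (Real.exp (v₂ x) - v₂ x - 1) ∧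
      lap v₂ x = 2 * k21 * v₁ x + 2 * k22 * v₂ x
          + 2 * k21 * (Real.exp (v₁ x) - v₁ x - 1)
          + 2 * k22 * (Real.exp (v₂ x) - v₂ x - 1)) :
    ∀ δ ∈ Set.Ioo (0 : ℝ) 1, ∃ C > (0 : ℝ), ∃ R ≥ R₀, ∀ x, R ≤ ‖x‖ →
      ‖fderiv ℝ v₁ x‖ ^ 2 + ‖fderiv ℝ v₂ x‖ ^ 2
        ≤ C * Real.exp (-(1 - δ) * Real.sqrt lam₀ * ‖x‖) :=
  gradient_exponential_decay_of_solutions_general p q hp hq k11 k12 k21 k22 lam₀ h11 h12 h21 h22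
    hlam R₀ v₁ v₂ hreg1 hreg2 hlim1 hlim2 hglim1 hglim2 hpde
end
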